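/- arXiv:2307.11057 — 4 statements merged into one kernel-verified Lean document; each statement's English description precedes it below -/
import Mathlib

section
/- Let (Q,ρ) be a directed set of states and < a total order on Q. If f, g ⊆ Q×Q are transitions that are both deterministic and planar with respect to ρ and <, then their gluing composition f*g is also deterministic and planar with respect to ρ and <. Moreover the identity relation on Q is deterministic and planar. -/
namespace Planar2DFT

/-- Tape alphabet: input letters plus the two endmarkers `▷` and `◁`. -/
inductive Tape (A : Type) where
  | lend : Tape A
  | rend : Tape A
  | sym  : A → Tape A

/-- Edges of the transition profile `G(ρ, f)` on vertices `Q × Bool`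
(`true` codes direction `+1`, `false` codes `-1`): an edge
`(q, -ρ q) → (r, ρ r)` for every `(q, r) ∈ f`. -/
def ProfileEdge {Q : Type} (ρ : Q → Bool) (f : Set (Q × Q)) :
    Q × Bool → Q × Bool → Prop :=
  fun u v => ∃ p ∈ f, u = (p.1, !ρ p.1) ∧ v = (p.2, ρ p.2)

/-- The extension of a strict order on `Q` to `Q × Bool`:
`(q,i) < (r,j)` iff (`i = -1` and `j = 1`), or (`q < r` and `i = j = 1`),
or (`q > r` and `i = j = -1`). -/
def ExtLt {Q : Type} (lt : Q → Q → Prop) : Q × Bool → Q × Bool → Prop :=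
  fun x y =>
    (x.2 = false ∧ y.2 = true) ∨
    (lt x.1 y.1 ∧ x.2 = true ∧ y.2 = true) ∨
    (lt y.1 x.1 ∧ x.2 = false ∧ y.2 = false)

/-- Planarity of a transition w.r.t. a direction map `ρ` and a strict total
order `lt`: no vertices `u < r < v < s` with an edge between `u` and `v`
(in either direction) and an edge between `r` and `s` (in either direction). -/
def IsPlanar {Q : Type} (ρ : Q → Bool) (lt : Q → Q → Prop) (f : Set (Q × Q)) : Prop :=
  ¬ ∃ u r v s : Q × Bool, ExtLt lt u r ∧ ExtLt lt r v ∧ ExtLt lt v s ∧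
      (ProfileEdge ρ f u v ∨ ProfileEdge ρ f v u) ∧
      (ProfileEdge ρ f r s ∨ ProfileEdge ρ f s r)

/-- Deterministic transition: a partial function. -/
def IsDet {Q : Type} (f : Set (Q × Q)) : Prop :=
  ∀ q r r', (q, r) ∈ f → (q, r') ∈ f → r = r'

/-- Reversible transition: a partial injection. -/
def IsRev {Q : Type} (f : Set (Q × Q)) : Prop :=
  IsDet f ∧ ∀ q q' r, (q, r) ∈ f → (q', r) ∈ f → q = q'

/-- Edges of the glued graph `C(ρ, f, g)` on `Q × Fin 3`, levels `0, 1, 2`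
coding `-1, 0, 1`: the copy of `G(ρ,f)` lives on levels `{0,1}` (side `+1`
corresponding to level `1`) and the copy of `G(ρ,g)` on levels `{1,2}`
(side `+1` corresponding to level `2`). -/
def GlueEdge {Q : Type} (ρ : Q → Bool) (f g : Set (Q × Q)) :
    Q × Fin 3 → Q × Fin 3 → Prop :=
  fun x y =>
    (x.2 ≠ 2 ∧ y.2 ≠ 2 ∧
      ProfileEdge ρ f (x.1, decide (x.2 = 1)) (y.1, decide (y.2 = 1))) ∨
    (x.2 ≠ 0 ∧ y.2 ≠ 0 ∧
      ProfileEdge ρ g (x.1, decide (x.2 = 2)) (y.1, decide (y.2 = 2)))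

/-- Gluing composition `f * g` of transitions: `(q, r) ∈ f * g` iff there is a
directed path from `(q, -ρ q)` to `(r, ρ r)` in the glued graph `C(ρ, f, g)`. -/
def glue {Q : Type} (ρ : Q → Bool) (f g : Set (Q × Q)) : Set (Q × Q) :=
  {p | Relation.ReflTransGen (GlueEdge ρ f g)
        (p.1, if ρ p.1 then (0 : Fin 3) else 2)
        (p.2, if ρ p.2 then (2 : Fin 3) else 0)}

/-- The identity transition, unit of the gluing composition. -/
def idRel (Q : Type) : Set (Q × Q) := {p | p.1 = p.2}

/-- Iterated gluing powers of a transition, with `glpow ρ f 0 = idRel Q`. -/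
def glpow {Q : Type} (ρ : Q → Bool) (f : Set (Q × Q)) : ℕ → Set (Q × Q)
  | 0 => idRel Q
  | n + 1 => glue ρ (glpow ρ f n) f

/-- A configuration of a two-way machine: the tape content to the left of the
head, the current state, and the tape content to the right of the head. -/
abbrev Config (Q A : Type) := List (Tape A) × Q × List (Tape A)

/-- The tape encoding `▷ u ◁` of an input word `u`. -/
def tapeOf {A : Type} (u : List A) : List (Tape A) :=
  Tape.lend :: (u.map Tape.sym ++ [Tape.rend])

/-- A two-way (nondeterministic) finite transducer. -/
structure TwoWayTransducer (Q A B : Type) where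
  ρ : Q → Bool
  init : Q
  init_fwd : ρ init = true
  final : Set Q
  δ : Tape A → Set (Q × List B × Q)

namespace TwoWayTransducer

variable {Q A B : Type}

/-- The transitions `⌊δ⌋(a)` of the underlying automaton. -/
def rel (T : TwoWayTransducer Q A B) (a : Tape A) : Set (Q × Q) :=
  {p | ∃ w, (p.1, w, p.2) ∈ T.δ a}

def Deterministic (T : TwoWayTransducer Q A B) : Prop :=
  ∀ a, IsDet (T.rel a)

def Reversible (T : TwoWayTransducer Q A B) : Prop :=
  ∀ a, IsRev (T.rel a)

def Planar (T : TwoWayTransducer Q A B) : Prop :=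
  ∃ lt : Q → Q → Prop, IsStrictTotalOrder Q lt ∧
    ∀ a : A, IsPlanar T.ρ lt (T.rel (Tape.sym a))

/-- One step of the two-way transducer, labelled by the output word. -/
def Step (T : TwoWayTransducer Q A B) (c : Config Q A) (w : List B)
    (c' : Config Q A) : Prop :=
  ∃ a u v q r, (q, w, r) ∈ T.δ a ∧
    ((T.ρ q = true ∧ T.ρ r = true ∧ c = (u, q, a :: v) ∧ c' = (u ++ [a], r, v)) ∨
     (T.ρ q = true ∧ T.ρ r = false ∧ c = (u, q, a :: v) ∧ c' = (u, r, a :: v)) ∨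
     (T.ρ q = false ∧ T.ρ r = false ∧ c = (u ++ [a], q, v) ∧ c' = (u, r, a :: v)) ∨
     (T.ρ q = false ∧ T.ρ r = true ∧ c = (u ++ [a], q, v) ∧ c' = (u ++ [a], r, v)))

/-- Multi-step runs, accumulating the concatenated output. -/
inductive Run (T : TwoWayTransducer Q A B) : Config Q A → List B → Config Q A → Prop
  | refl (c : Config Q A) : Run T c [] c
  | step {c₁ w₁ c₂ w₂ c₃} : Run T c₁ w₁ c₂ → T.Step c₂ w₂ c₃ → Run T c₁ (w₁ ++ w₂) c₃

/-- The pair `(u, v)` is realized by `T`. -/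
def Realizes (T : TwoWayTransducer Q A B) (u : List A) (v : List B) : Prop :=
  ∃ qf ∈ T.final, T.Run ([], T.init, tapeOf u) v (tapeOf u, qf, [])

/-- `T` computes the partial function `f`. -/
def Computes (T : TwoWayTransducer Q A B) (f : List A → Option (List B)) : Prop :=
  ∀ u v, f u = some v ↔ T.Realizes u v

end TwoWayTransducer

/-- Membership in the least submonoid of `B(Q,ρ)` containing the transitions
`⌊δ⌋(a)` for the input letters `a`. -/
inductive InBehav {Q A B : Type} (T : TwoWayTransducer Q A B) : Set (Q × Q) → Prop
  | one : InBehav T (idRel Q)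
  | gen (a : A) : InBehav T (T.rel (Tape.sym a))
  | mul {f g} : InBehav T f → InBehav T g → InBehav T (glue T.ρ f g)

/-- The behaviour monoid `B(T)` is aperiodic. -/
def ApBehav {Q A B : Type} (T : TwoWayTransducer Q A B) : Prop :=
  ∃ n : ℕ, ∀ f, InBehav T f → glpow T.ρ f (n + 1) = glpow T.ρ f n

/-- A first-order transduction: a partial function computed by some
deterministic two-way transducer whose behaviour monoid is aperiodic. -/
def IsFOTransduction {A B : Type} (f : List A → Option (List B)) : Prop :=
  ∃ (n : ℕ) (T : TwoWayTransducer (Fin n) A B),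
    T.Deterministic ∧ ApBehav T ∧ T.Computes f

/-- A two-way (nondeterministic) finite automaton. -/
structure TwoWayAutomaton (Q A : Type) where
  ρ : Q → Bool
  init : Q
  init_fwd : ρ init = true
  final : Set Q
  δ : Tape A → Set (Q × Q)

namespace TwoWayAutomaton

variable {Q A : Type}

def Deterministic (M : TwoWayAutomaton Q A) : Prop := ∀ a, IsDet (M.δ a)

def Reversible (M : TwoWayAutomaton Q A) : Prop := ∀ a, IsRev (M.δ a)

def Planar (M : TwoWayAutomaton Q A) : Prop :=
  ∃ lt : Q → Q → Prop, IsStrictTotalOrder Q lt ∧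
    ∀ a : A, IsPlanar M.ρ lt (M.δ (Tape.sym a))

/-- One step of the two-way automaton. -/
def Step (M : TwoWayAutomaton Q A) (c c' : Config Q A) : Prop :=
  ∃ a u v q r, (q, r) ∈ M.δ a ∧
    ((M.ρ q = true ∧ M.ρ r = true ∧ c = (u, q, a :: v) ∧ c' = (u ++ [a], r, v)) ∨
     (M.ρ q = true ∧ M.ρ r = false ∧ c = (u, q, a :: v) ∧ c' = (u, r, a :: v)) ∨
     (M.ρ q = false ∧ M.ρ r = false ∧ c = (u ++ [a], q, v) ∧ c' = (u, r, a :: v)) ∨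
     (M.ρ q = false ∧ M.ρ r = true ∧ c = (u ++ [a], q, v) ∧ c' = (u ++ [a], r, v)))

def Accepts (M : TwoWayAutomaton Q A) (u : List A) : Prop :=
  ∃ qf ∈ M.final, Relation.ReflTransGen M.Step
    ([], M.init, tapeOf u) (tapeOf u, qf, [])

def Language (M : TwoWayAutomaton Q A) : Set (List A) := {u | M.Accepts u}

end TwoWayAutomaton

/-- The underlying automaton `⌊T⌋` of a transducer `T`. -/
def forget {Q A B : Type} (T : TwoWayTransducer Q A B) : TwoWayAutomaton Q A :=
  { ρ := T.ρ, init := T.init, init_fwd := T.init_fwd, final := T.final,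
    δ := fun a => T.rel a }

/-- Star-free languages: the smallest class containing all finite languages
and closed under finite union, complement and concatenation. -/
inductive StarFree {A : Type} : Set (List A) → Prop
  | of_finite (L : Set (List A)) : L.Finite → StarFree L
  | union {L M : Set (List A)} : StarFree L → StarFree M → StarFree (L ∪ M)
  | compl {L : Set (List A)} : StarFree L → StarFree Lᶜ
  | concat {L M : Set (List A)} : StarFree L → StarFree M →
      StarFree {w | ∃ u ∈ L, ∃ v ∈ M, w = u ++ v}

/-- A (total, deterministic) sequential transducer. -/
structure SeqTransducer (Q A B : Type) where
  init : Q
  next : A → Q → Q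
  out : A → Q → List B
  fin : Q → List B

namespace SeqTransducer

variable {Q A B : Type}

/-- Running a sequential transducer on a word from a state: final state and
produced output. -/
def run (T : SeqTransducer Q A B) : List A → Q → Q × List B
  | [], q => (q, [])
  | a :: w, q =>
      let p := run T w (T.next a q)
      (p.1, T.out a q ++ p.2)

/-- The (total) sequential function computed by a sequential transducer. -/
def fn (T : SeqTransducer Q A B) (w : List A) : List B :=
  (T.run w T.init).2 ++ T.fin (T.run w T.init).1

end SeqTransducer

/-- Membership in the transition monoid of a sequential transducer, i.e. the
monoid of functions `Q → Q` generated by the `∂₁(a)`. -/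
inductive SeqGen {Q A B : Type} (T : SeqTransducer Q A B) : (Q → Q) → Prop
  | id : SeqGen T id
  | gen (a : A) : SeqGen T (T.next a)
  | comp {h h'} : SeqGen T h → SeqGen T h' → SeqGen T (h ∘ h')

/-- A sequential transducer is aperiodic when its transition monoid is. -/
def SeqTransducer.Aperiodic {Q A B : Type} (T : SeqTransducer Q A B) : Prop :=
  ∃ n : ℕ, ∀ h, SeqGen T h → h^[n + 1] = h^[n]



section Statement3Helpers

open Classical Relation

variable {Q : Type}

/-! ### Indicator algebra in `ZMod 2` -/

noncomputable def ind (p : Prop) : ZMod 2 := if p then 1 else 0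

lemma ind_eq_one {p : Prop} (h : p) : ind p = 1 := if_pos h
lemma ind_eq_zero {p : Prop} (h : ¬ p) : ind p = 0 := if_neg h
lemma ind_congr {p q : Prop} (h : p ↔ q) : ind p = ind q := if_congr h rfl rfl

lemma ind_not (p : Prop) : ind (¬ p) = 1 + ind p := by
  by_cases h : p
  · rw [ind_eq_one h, ind_eq_zero (not_not_intro h)]; decide
  · rw [ind_eq_one h, ind_eq_zero h]; decide

lemma zmod2_self (a : ZMod 2) : a + a = 0 := CharTwo.add_self_eq_zero a

lemma zmod2_cancel {a b : ZMod 2} (h : a + b = 0) : a = b := by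
  rw [eq_neg_of_add_eq_zero_left h, CharTwo.neg_eq]

/-- For a strict total order, indicators of membership in the two "rays" at
`u` and `v` add up to the indicator of the open interval between them. -/
lemma ind_rel_left {α : Type*} {T : α → α → Prop}
    (htr : ∀ {a b c : α}, T a b → T b c → T a c)
    (hirr : ∀ a : α, ¬ T a a)
    (htri : ∀ a b : α, T a b ∨ a = b ∨ T b a)
    {u v a : α} (hau : a ≠ u) (hav : a ≠ v) :
    ind (T u a) + ind (T v a) = ind ((T u a ∧ T a v) ∨ (T v a ∧ T a u)) := by
  have hasym : ∀ {x y : α}, T x y → ¬ T y x := fun h1 h2 => hirr _ (htr h1 h2)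
  rcases htri u a with h1 | h1 | h1
  · rcases htri v a with h2 | h2 | h2
    · rw [ind_eq_one h1, ind_eq_one h2, ind_eq_zero]
      · decide
      · rintro (⟨_, hv⟩ | ⟨_, hu⟩); exacts [hasym h2 hv, hasym h1 hu]
    · exact absurd h2.symm hav
    · rw [ind_eq_one h1, ind_eq_zero (hasym h2), ind_eq_one (Or.inl ⟨h1, h2⟩)]; decide
  · exact absurd h1.symm hau
  · rcases htri v a with h2 | h2 | h2
    · rw [ind_eq_zero (hasym h1), ind_eq_one h2, ind_eq_one (Or.inr ⟨h2, h1⟩)]; decide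
    · exact absurd h2.symm hav
    · rw [ind_eq_zero (hasym h1), ind_eq_zero (hasym h2), ind_eq_zero]
      · decide
      · rintro (⟨hu, _⟩ | ⟨hv, _⟩); exacts [hasym h1 hu, hasym h2 hv]

lemma ind_rel_right {α : Type*} {T : α → α → Prop}
    (htr : ∀ {a b c : α}, T a b → T b c → T a c)
    (hirr : ∀ a : α, ¬ T a a)
    (htri : ∀ a b : α, T a b ∨ a = b ∨ T b a)
    {u v a : α} (hau : a ≠ u) (hav : a ≠ v) :
    ind (T a u) + ind (T a v) = ind ((T u a ∧ T a v) ∨ (T v a ∧ T a u)) := by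
  have hasym : ∀ {x y : α}, T x y → ¬ T y x := fun h1 h2 => hirr _ (htr h1 h2)
  rcases htri u a with h1 | h1 | h1
  · rcases htri v a with h2 | h2 | h2
    · rw [ind_eq_zero (hasym h1), ind_eq_zero (hasym h2), ind_eq_zero]
      · decide
      · rintro (⟨_, hv⟩ | ⟨_, hu⟩); exacts [hasym h2 hv, hasym h1 hu]
    · exact absurd h2.symm hav
    · rw [ind_eq_zero (hasym h1), ind_eq_one h2, ind_eq_one (Or.inl ⟨h1, h2⟩)]; decide
  · exact absurd h1.symm hau
  · rcases htri v a with h2 | h2 | h2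
    · rw [ind_eq_one h1, ind_eq_zero (hasym h2), ind_eq_one (Or.inr ⟨h2, h1⟩)]; decide
    · exact absurd h2.symm hav
    · rw [ind_eq_one h1, ind_eq_one h2, ind_eq_zero]
      · decide
      · rintro (⟨hu, _⟩ | ⟨hv, _⟩); exacts [hirr _ (htr h1 hu), hirr _ (htr h2 hv)]

/-! ### Facts about `ExtLt` -/

variable {lt : Q → Q → Prop}

section ExtLtFacts
variable [IsStrictTotalOrder Q lt]

lemma lt_trans' : ∀ {a b c : Q}, lt a b → lt b c → lt a c :=
  fun h1 h2 => IsTrans.trans _ _ _ h1 h2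

lemma lt_irrefl' : ∀ a : Q, ¬ lt a a := fun a => irrefl_of lt a

lemma lt_trich' : ∀ a b : Q, lt a b ∨ a = b ∨ lt b a := fun a b => trichotomous_of lt a b

lemma lt_asymm' {a b : Q} (h : lt a b) : ¬ lt b a := fun h2 => lt_irrefl' a (lt_trans' h h2)

lemma ind_lt_flip {a b : Q} (h : a ≠ b) : ind (lt a b) = 1 + ind (lt b a) := by
  rcases lt_trich' (lt := lt) a b with h1 | h1 | h1
  · rw [ind_eq_one h1, ind_eq_zero (lt_asymm' h1)]; decide
  · exact absurd h1 h
  · rw [ind_eq_zero (lt_asymm' h1), ind_eq_one h1]; decide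

lemma extLt_trans {x y z : Q × Bool} (h1 : ExtLt lt x y) (h2 : ExtLt lt y z) :
    ExtLt lt x z := by
  obtain ⟨x1, x2⟩ := x; obtain ⟨y1, y2⟩ := y; obtain ⟨z1, z2⟩ := z
  simp only [ExtLt] at h1 h2 ⊢
  cases x2 <;> cases y2 <;> cases z2 <;> simp_all
  exacts [lt_trans' h2 h1, lt_trans' h1 h2]

lemma extLt_irrefl (x : Q × Bool) : ¬ ExtLt lt x x := by
  obtain ⟨x1, x2⟩ := x
  simp only [ExtLt]
  cases x2 <;> simp_all <;> exact lt_irrefl' x1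

lemma extLt_asymm {x y : Q × Bool} (h : ExtLt lt x y) : ¬ ExtLt lt y x :=
  fun h2 => extLt_irrefl x (extLt_trans h h2)

lemma extLt_trich (x y : Q × Bool) : ExtLt lt x y ∨ x = y ∨ ExtLt lt y x := by
  obtain ⟨x1, x2⟩ := x; obtain ⟨y1, y2⟩ := y
  cases x2 <;> cases y2 <;> simp only [ExtLt] <;> simp_all
  · rcases lt_trich' (lt := lt) x1 y1 with h | h | h <;> tauto
  · rcases lt_trich' (lt := lt) x1 y1 with h | h | h <;> tauto

end ExtLtFacts


/-! ### Structural definitions for the glued graph -/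

lemma fin3_cases (i : Fin 3) : i = 0 ∨ i = 1 ∨ i = 2 := by revert i; decide

lemma fin3_ne2 {i : Fin 3} (h : i ≠ 2) : i = 0 ∨ i = 1 := by
  rcases fin3_cases i with h' | h' | h' <;> tauto

lemma fin3_ne0 {i : Fin 3} (h : i ≠ 0) : i = 1 ∨ i = 2 := by
  rcases fin3_cases i with h' | h' | h' <;> tauto

lemma fin3_ne1 {i : Fin 3} (h : i ≠ 1) : i = 0 ∨ i = 2 := by
  rcases fin3_cases i with h' | h' | h' <;> tauto

variable {ρ : Q → Bool} {f g h : Set (Q × Q)}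

lemma profileEdge_iff {u v : Q × Bool} :
    ProfileEdge ρ h u v ↔ ((u.1, v.1) ∈ h ∧ u.2 = !ρ u.1 ∧ v.2 = ρ v.1) := by
  constructor
  · rintro ⟨p, hp, rfl, rfl⟩; exact ⟨hp, rfl, rfl⟩
  · rintro ⟨hm, h1, h2⟩
    exact ⟨(u.1, v.1), hm, Prod.ext_iff.mpr ⟨rfl, h1⟩, Prod.ext_iff.mpr ⟨rfl, h2⟩⟩

lemma profile_ne {u v : Q × Bool} (hp : ProfileEdge ρ h u v) : u ≠ v := by
  rw [profileEdge_iff] at hp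
  intro he
  exact (Bool.not_ne_self (ρ u.1)) (by rw [← hp.2.1, he, hp.2.2])

/-- The `f`-side coding of a glued-graph vertex. -/
def fC (v : Q × Fin 3) : Q × Bool := (v.1, decide (v.2 = 1))

/-- The `g`-side (and boundary) coding of a glued-graph vertex. -/
def gC (v : Q × Fin 3) : Q × Bool := (v.1, decide (v.2 = 2))

lemma fC_eval0 {v : Q × Fin 3} (h : v.2 = 0) : fC v = (v.1, false) := by
  unfold fC; rw [h]; rfl
lemma fC_eval1 {v : Q × Fin 3} (h : v.2 = 1) : fC v = (v.1, true) := by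
  unfold fC; rw [h]; rfl
lemma fC_eval2 {v : Q × Fin 3} (h : v.2 = 2) : fC v = (v.1, false) := by
  unfold fC; rw [h]; rfl
lemma fC_evalne1 {v : Q × Fin 3} (h : v.2 ≠ 1) : fC v = (v.1, false) := by
  rcases fin3_ne1 h with h' | h'; exacts [fC_eval0 h', fC_eval2 h']
lemma gC_eval0 {v : Q × Fin 3} (h : v.2 = 0) : gC v = (v.1, false) := by
  unfold gC; rw [h]; rfl
lemma gC_eval1 {v : Q × Fin 3} (h : v.2 = 1) : gC v = (v.1, false) := by
  unfold gC; rw [h]; rfl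
lemma gC_eval2 {v : Q × Fin 3} (h : v.2 = 2) : gC v = (v.1, true) := by
  unfold gC; rw [h]; rfl

lemma ne_fst {c u : Q × Fin 3} (h : c ≠ u) (h2 : c.2 = u.2) : c.1 ≠ u.1 :=
  fun he => h (Prod.ext_iff.mpr ⟨he, h2⟩)

lemma fC_ne {v x : Q × Fin 3} (hv : v.2 ≠ 2) (hx : x.2 ≠ 2) (h : v ≠ x) :
    fC v ≠ fC x := by
  intro he
  apply h
  have h1 := congrArg Prod.fst he
  have h2 := congrArg Prod.snd he
  simp only [fC] at h1 h2
  refine Prod.ext_iff.mpr ⟨h1, ?_⟩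
  rcases fin3_ne2 hv with e | e <;> rcases fin3_ne2 hx with e' | e' <;>
    rw [e, e'] at h2 ⊢ <;> simp_all

lemma gC_ne {v x : Q × Fin 3} (hv : v.2 ≠ 0) (hx : x.2 ≠ 0) (h : v ≠ x) :
    gC v ≠ gC x := by
  intro he
  apply h
  have h1 := congrArg Prod.fst he
  have h2 := congrArg Prod.snd he
  simp only [gC] at h1 h2
  refine Prod.ext_iff.mpr ⟨h1, ?_⟩
  rcases fin3_ne0 hv with e | e <;> rcases fin3_ne0 hx with e' | e' <;>
    rw [e, e'] at h2 ⊢ <;> simp_all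

/-- Strict betweenness on `Q × Bool` with respect to `ExtLt`. -/
def Btw (lt : Q → Q → Prop) (u v z : Q × Bool) : Prop :=
  (ExtLt lt u z ∧ ExtLt lt z v) ∨ (ExtLt lt v z ∧ ExtLt lt z u)

lemma btw_comm {lt : Q → Q → Prop} {u v z : Q × Bool} :
    Btw lt u v z ↔ Btw lt v u z := or_comm

/-- Whether a glued edge belongs to the `g`-copy. -/
def isG (ρ : Q → Bool) (a b : Q × Fin 3) : Prop :=
  a.2 = 2 ∨ b.2 = 2 ∨ (a.2 = 1 ∧ b.2 = 1 ∧ ρ a.1 = true)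

/-- The region of the glued graph lying "before" the reference curve of `z`
on the `f`-side. -/
def Bf (lt : Q → Q → Prop) (z v : Q × Fin 3) : Prop :=
  (z.2 = 0 ∧ v.2 = 0 ∧ lt z.1 v.1) ∨
  (z.2 = 1 ∧ (v.2 = 0 ∨ (v.2 = 1 ∧ lt v.1 z.1)))

/-- The region "after" the reference curve of `z` on the `g`-side. -/
def Bg (lt : Q → Q → Prop) (z v : Q × Fin 3) : Prop :=
  z.2 = 2 ∧ v.2 = 2 ∧ lt z.1 v.1

/-- The weight of a chord `(a,b)` crossing the reference curve of `z`. -/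
noncomputable def wgt (ρ : Q → Bool) (lt : Q → Q → Prop) (z a b : Q × Fin 3) : ZMod 2 :=
  if isG ρ a b then ind (Bg lt z a) + ind (Bg lt z b)
  else ind (Bf lt z a) + ind (Bf lt z b)

noncomputable def chordSum {α : Type*} (w : α → α → ZMod 2) : List α → ZMod 2
  | [] => 0
  | [_] => 0
  | a :: b :: t => w a b + chordSum w (b :: t)

/-- The side of the path `l` on which `z` lies. -/
noncomputable def sig (ρ : Q → Bool) (lt : Q → Q → Prop)
    (l : List (Q × Fin 3)) (z : Q × Fin 3) : ZMod 2 :=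
  chordSum (wgt ρ lt z) l

lemma chordSum_congr {α : Type*} {w1 w2 : α → α → ZMod 2} {R : α → α → Prop}
    {P : α → Prop} (hw : ∀ a b, R a b → P a → P b → w1 a b = w2 a b) :
    ∀ (l : List α), l.Chain' R → (∀ v ∈ l, P v) → chordSum w1 l = chordSum w2 l := by
  intro l
  induction l with
  | nil => intros; rfl
  | cons a t ih =>
    intro hc hP
    cases t with
    | nil => rfl
    | cons b t' =>
      have h1 := List.isChain_cons_cons.mp hc
      simp only [chordSum]
      rw [hw a b h1.1 (hP a (by simp)) (hP b (by simp)),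
        ih h1.2 (fun v hv => hP v (List.mem_cons_of_mem a hv))]

lemma chordSum_zero {α : Type*} (l : List α) : chordSum (fun _ _ => (0 : ZMod 2)) l = 0 := by
  induction l with
  | nil => rfl
  | cons a t ih =>
    cases t with
    | nil => rfl
    | cons b t' => simp only [chordSum]; rw [ih]; ring

lemma chordSum_add {α : Type*} (w1 w2 : α → α → ZMod 2) (l : List α) :
    chordSum (fun a b => w1 a b + w2 a b) l = chordSum w1 l + chordSum w2 l := by
  induction l with
  | nil => simp [chordSum]
  | cons a t ih =>
    cases t with
    | nil => simp [chordSum]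
    | cons b t' => simp only [chordSum] at ih ⊢; rw [ih]; ring

lemma chordSum_tele {α : Type*} (χ : α → ZMod 2) :
    ∀ (l : List α) (a : α),
      chordSum (fun x y => χ x + χ y) (a :: l) = χ a + χ ((a :: l).getLast (by simp)) := by
  intro l
  induction l with
  | nil =>
    intro a
    simp only [chordSum, List.getLast_singleton]
    exact (zmod2_self _).symm
  | cons b t ih =>
    intro a
    simp only [chordSum] at ih ⊢
    rw [ih b]
    have : (a :: b :: t).getLast (by simp) = (b :: t).getLast (by simp) :=
      List.getLast_cons_cons
    rw [this]
    have hb := zmod2_self (χ b)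
    linear_combination hb


/-! ### Evaluation of `ExtLt` on explicit booleans -/

lemma extLt_ff {lt : Q → Q → Prop} {a b : Q} : ExtLt lt (a, false) (b, false) ↔ lt b a := by
  simp [ExtLt]

lemma extLt_tt {lt : Q → Q → Prop} {a b : Q} : ExtLt lt (a, true) (b, true) ↔ lt a b := by
  simp [ExtLt]

lemma extLt_ft {lt : Q → Q → Prop} {a b : Q} : ExtLt lt (a, false) (b, true) := by
  simp [ExtLt]

lemma extLt_tf {lt : Q → Q → Prop} {a b : Q} : ¬ ExtLt lt (a, true) (b, false) := by
  simp [ExtLt]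

/-! ### Classification of glued edges -/

lemma glue_classify {a b : Q × Fin 3} (hd : GlueEdge ρ f g a b) :
    (¬ isG ρ a b ∧ a.2 ≠ 2 ∧ b.2 ≠ 2 ∧ ProfileEdge ρ f (fC a) (fC b)) ∨
    (isG ρ a b ∧ a.2 ≠ 0 ∧ b.2 ≠ 0 ∧ ProfileEdge ρ g (gC a) (gC b)) := by
  rcases hd with ⟨ha, hb, pe⟩ | ⟨ha, hb, pe⟩
  · left
    refine ⟨?_, ha, hb, pe⟩
    rintro (h2 | h2 | ⟨ha1, hb1, hρ⟩)
    · exact ha h2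
    · exact hb h2
    · have hsnd := (profileEdge_iff.mp pe).2.1
      simp only [fC] at hsnd
      rw [ha1] at hsnd
      simp at hsnd
      rw [hsnd] at hρ
      simp at hρ
  · right
    refine ⟨?_, ha, hb, pe⟩
    rcases fin3_ne0 ha with h1 | h1
    · rcases fin3_ne0 hb with h2 | h2
      · refine Or.inr (Or.inr ⟨h1, h2, ?_⟩)
        have hsnd := (profileEdge_iff.mp pe).2.1
        simp only [gC] at hsnd
        rw [h1] at hsnd
        simp at hsnd
        simp [hsnd]
      · exact Or.inr (Or.inl h2)
    · exact Or.inl h1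

lemma bf_iff {lt : Q → Q → Prop} {z v : Q × Fin 3} (hz : z.2 ≠ 2) (hv : v.2 ≠ 2) :
    Bf lt z v ↔ ExtLt lt (fC v) (fC z) := by
  rcases fin3_ne2 hz with h1 | h1 <;> rcases fin3_ne2 hv with h2 | h2 <;>
    rw [fC, fC, h1, h2] <;> simp [Bf, ExtLt, h1, h2]

lemma bg_eval2 {lt : Q → Q → Prop} {z v : Q × Fin 3} (hz : z.2 = 2) :
    Bg lt z v ↔ (v.2 = 2 ∧ lt z.1 v.1) := by simp [Bg, hz]

lemma bg_zero {lt : Q → Q → Prop} {z v : Q × Fin 3} (hz : z.2 ≠ 2) :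
    ind (Bg lt z v) = 0 := ind_eq_zero (fun hb => hz hb.1)

lemma bf_zero2 {lt : Q → Q → Prop} {z v : Q × Fin 3} (hz : z.2 = 2) :
    ind (Bf lt z v) = 0 := by
  refine ind_eq_zero ?_
  rintro (⟨h1, _⟩ | ⟨h1, _⟩) <;> rw [hz] at h1 <;> simp at h1

/-! ### Non-crossing of profile edges -/

section Noncross
variable {lt : Q → Q → Prop} [IsStrictTotalOrder Q lt]

lemma noncross_aux {x y a b : Q × Bool} (hpl : IsPlanar ρ lt h)
    (hxy : ExtLt lt x y)
    (he : ProfileEdge ρ h x y ∨ ProfileEdge ρ h y x)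
    (hc : ProfileEdge ρ h a b ∨ ProfileEdge ρ h b a)
    (hbx : b ≠ x) (hby : b ≠ y)
    (hA : Btw lt x y a) (hB : ¬ Btw lt x y b) : False := by
  have hxa : ExtLt lt x a ∧ ExtLt lt a y := by
    rcases hA with h' | ⟨h1, h2⟩
    · exact h'
    · exact absurd (extLt_trans h1 h2) (extLt_asymm hxy)
  rcases extLt_trich (lt := lt) b x with hbx' | rfl | hxb
  · exact hpl ⟨b, x, a, y, hbx', hxa.1, hxa.2, Or.symm hc, he⟩
  · exact hbx rfl
  · rcases extLt_trich (lt := lt) b a with hba | rfl | hab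
    · exact hB (Or.inl ⟨hxb, extLt_trans hba hxa.2⟩)
    · exact hB hA
    · rcases extLt_trich (lt := lt) b y with hby' | rfl | hyb
      · exact hB (Or.inl ⟨hxb, hby'⟩)
      · exact hby rfl
      · exact hpl ⟨x, a, y, b, hxa.1, hxa.2, hyb, he, hc⟩

lemma noncross {x y a b : Q × Bool} (hpl : IsPlanar ρ lt h)
    (he : ProfileEdge ρ h x y ∨ ProfileEdge ρ h y x)
    (hc : ProfileEdge ρ h a b ∨ ProfileEdge ρ h b a)
    (hax : a ≠ x) (hay : a ≠ y) (hbx : b ≠ x) (hby : b ≠ y) :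
    (Btw lt x y a ↔ Btw lt x y b) := by
  have hxyne : x ≠ y := by
    rcases he with pe | pe; exacts [profile_ne pe, (profile_ne pe).symm]
  constructor
  · intro hA
    by_contra hB
    rcases extLt_trich (lt := lt) x y with hxy | heq | hyx
    · exact noncross_aux hpl hxy he hc hbx hby hA hB
    · exact hxyne heq
    · exact noncross_aux hpl hyx (Or.symm he) hc hby hbx
        (btw_comm.mp hA) (fun hh => hB (btw_comm.mp hh))
  · intro hA
    by_contra hB
    rcases extLt_trich (lt := lt) x y with hxy | heq | hyx
    · exact noncross_aux hpl hxy he (Or.symm hc) hax hay hA hB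
    · exact hxyne heq
    · exact noncross_aux hpl hyx (Or.symm he) (Or.symm hc) hay hax
        (btw_comm.mp hA) (fun hh => hB (btw_comm.mp hh))

end Noncross

/-! ### Ports, sinks, determinism of the glued graph -/

def port (z : Q × Bool) : Q × Fin 3 := (z.1, if z.2 then 2 else 0)

lemma port_inj {a b : Q × Bool} (h : port a = port b) : a = b := by
  obtain ⟨a1, a2⟩ := a; obtain ⟨b1, b2⟩ := b
  have h1 := congrArg Prod.fst h
  have h2 := congrArg Prod.snd h
  simp only [port] at h1 h2
  cases a2 <;> cases b2 <;> simp_all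

lemma port_ne1 (z : Q × Bool) : (port z).2 ≠ 1 := by
  obtain ⟨z1, z2⟩ := z; cases z2 <;> simp [port]

lemma gC_port (z : Q × Bool) : gC (port z) = z := by
  obtain ⟨z1, z2⟩ := z; cases z2 <;> rfl

lemma start_eq (p : Q) : ((p, if ρ p then (0 : Fin 3) else 2) : Q × Fin 3) = port (p, !ρ p) := by
  cases hρ : ρ p <;> simp [port, hρ]

lemma end_eq (p : Q) : ((p, if ρ p then (2 : Fin 3) else 0) : Q × Fin 3) = port (p, ρ p) := by
  cases hρ : ρ p <;> simp [port, hρ]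

lemma end_sink (p : Q) (y : Q × Fin 3) : ¬ GlueEdge ρ f g (port (p, ρ p)) y := by
  intro hd
  cases hρ : ρ p <;> rw [hρ] at hd
  · rcases hd with ⟨h2, _, pe⟩ | ⟨h0, _, pe⟩
    · have hsnd := (profileEdge_iff.mp pe).2.1
      simp [port, hρ] at hsnd
    · simp [port] at h0
  · rcases hd with ⟨h2, _, pe⟩ | ⟨h0, _, pe⟩
    · simp [port] at h2
    · have hsnd := (profileEdge_iff.mp pe).2.1
      simp [port, hρ] at hsnd

lemma out_unique (hf : IsDet f) (hg : IsDet g) {x y y' : Q × Fin 3}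
    (h1 : GlueEdge ρ f g x y) (h2 : GlueEdge ρ f g x y') : y = y' := by
  rcases h1 with ⟨hx2, hy2, pe⟩ | ⟨hx0, hy0, pe⟩ <;>
    rcases h2 with ⟨hx2', hy2', pe'⟩ | ⟨hx0', hy0', pe'⟩
  · obtain ⟨hm, _, hsnd⟩ := profileEdge_iff.mp pe
    obtain ⟨hm', _, hsnd'⟩ := profileEdge_iff.mp pe'
    have hq : y.1 = y'.1 := hf x.1 y.1 y'.1 hm hm'
    refine Prod.ext_iff.mpr ⟨hq, ?_⟩
    have hs1 : (decide (y.2 = 1)) = ρ y.1 := hsnd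
    have hs2 : (decide (y'.2 = 1)) = ρ y'.1 := hsnd'
    rw [hq] at hs1
    have : (decide (y.2 = 1)) = (decide (y'.2 = 1)) := by rw [hs1, hs2]
    rcases fin3_ne2 hy2 with e | e <;> rcases fin3_ne2 hy2' with e' | e' <;>
      rw [e, e'] at this ⊢ <;> simp_all
  · exfalso
    have hx1 : x.2 = 1 := by
      rcases fin3_cases x.2 with e | e | e
      · exact absurd e hx0'
      · exact e
      · exact absurd e hx2
    have ha := (profileEdge_iff.mp pe).2.1
    have hb := (profileEdge_iff.mp pe').2.1
    simp only [fC, gC] at ha hb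
    rw [hx1] at ha hb
    simp at ha hb
    rw [ha] at hb
    simp at hb
  · exfalso
    have hx1 : x.2 = 1 := by
      rcases fin3_cases x.2 with e | e | e
      · exact absurd e hx0
      · exact e
      · exact absurd e hx2'
    have ha := (profileEdge_iff.mp pe').2.1
    have hb := (profileEdge_iff.mp pe).2.1
    simp only [fC, gC] at ha hb
    rw [hx1] at ha hb
    simp at ha hb
    rw [ha] at hb
    simp at hb
  · obtain ⟨hm, _, hsnd⟩ := profileEdge_iff.mp pe
    obtain ⟨hm', _, hsnd'⟩ := profileEdge_iff.mp pe'
    have hq : y.1 = y'.1 := hg x.1 y.1 y'.1 hm hm'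
    refine Prod.ext_iff.mpr ⟨hq, ?_⟩
    have hs1 : (decide (y.2 = 2)) = ρ y.1 := hsnd
    have hs2 : (decide (y'.2 = 2)) = ρ y'.1 := hsnd'
    rw [hq] at hs1
    have : (decide (y.2 = 2)) = (decide (y'.2 = 2)) := by rw [hs1, hs2]
    rcases fin3_ne0 hy0 with e | e <;> rcases fin3_ne0 hy0' with e' | e' <;>
      rw [e, e'] at this ⊢ <;> simp_all

lemma rtg_unique_sink {α : Type*} {R : α → α → Prop}
    (hdet : ∀ ⦃x y y' : α⦄, R x y → R x y' → y = y') {b c : α}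
    (hb : ∀ y, ¬ R b y) (hc : ∀ y, ¬ R c y) :
    ∀ {a : α}, Relation.ReflTransGen R a b → Relation.ReflTransGen R a c → b = c := by
  intro a h1
  induction h1 using Relation.ReflTransGen.head_induction_on with
  | refl =>
    intro h2
    rcases h2.cases_head with heq | ⟨y, hy, _⟩
    · exact heq
    · exact absurd hy (hb y)
  | head hxz hzb ih =>
    intro h2
    rcases h2.cases_head with heq | ⟨z', hxz', hz'c⟩
    · exact absurd (heq ▸ hxz) (hc _)
    · exact ih (by rwa [← hdet hxz hxz'] at hz'c)

/-! ### Lists realizing reflexive-transitive paths -/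

lemma rtg_list {α : Type*} {R : α → α → Prop} {a b : α}
    (hrtg : Relation.ReflTransGen R a b) :
    ∃ l : List α, l.Chain' R ∧ ∃ hne : l ≠ [],
      l.head hne = a ∧ l.getLast hne = b := by
  induction hrtg with
  | refl => exact ⟨[a], List.isChain_singleton a, by simp, rfl, rfl⟩
  | @tail b' c hab hbc ih =>
    obtain ⟨l, hch, hne, hh, hl⟩ := ih
    refine ⟨l ++ [c], ?_, by simp, ?_, ?_⟩
    · show List.IsChain R (l ++ [c])
      rw [List.isChain_append]
      refine ⟨hch, List.isChain_singleton c, ?_⟩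
      intro x hx y hy
      rw [List.getLast?_eq_getLast hne] at hx
      simp at hx hy
      rw [← hx, ← hy, hl]
      exact hbc
    · rw [List.head_append_of_ne_nil hne]; exact hh
    · rw [List.getLast_append]
      simp

lemma chain_mem_rtg {α : Type*} {R : α → α → Prop} :
    ∀ {l : List α}, l.Chain' R → ∀ {a : α}, a ∈ l → ∀ (hne : l ≠ []),
      Relation.ReflTransGen R a (l.getLast hne) := by
  intro l
  induction l with
  | nil => intro _ a ha; simp at ha
  | cons b t ih =>
    intro hc a ha hne
    cases t with
    | nil =>
      simp at ha
      subst ha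
      exact Relation.ReflTransGen.refl
    | cons c t' =>
      have h1 := List.isChain_cons_cons.mp hc
      rw [List.getLast_cons_cons]
      rcases List.mem_cons.mp ha with rfl | ha'
      · exact Relation.ReflTransGen.head h1.1 (ih h1.2 (by simp) (by simp))
      · exact ih h1.2 ha' (by simp)


/-! ### The side function `sig` is invariant along edges disjoint from the path -/

lemma btw_tt_f {lt : Q → Q → Prop} {a b c : Q} : ¬ Btw lt (a, true) (b, true) (c, false) := by
  rintro (⟨h1, _⟩ | ⟨h1, _⟩) <;> exact extLt_tf h1

lemma btw_ff_t {lt : Q → Q → Prop} {a b c : Q} : ¬ Btw lt (a, false) (b, false) (c, true) := by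
  rintro (⟨_, h2⟩ | ⟨_, h2⟩) <;> exact extLt_tf h2

lemma btw_ft_f {lt : Q → Q → Prop} {a b c : Q} :
    Btw lt (a, false) (b, true) (c, false) ↔ lt c a := by
  constructor
  · rintro (⟨h1, _⟩ | ⟨h1, _⟩)
    · exact extLt_ff.mp h1
    · exact absurd h1 extLt_tf
  · intro h1; exact Or.inl ⟨extLt_ff.mpr h1, extLt_ft⟩

lemma btw_ft_t {lt : Q → Q → Prop} {a b c : Q} :
    Btw lt (a, false) (b, true) (c, true) ↔ lt c b := by
  constructor
  · rintro (⟨_, h2⟩ | ⟨_, h2⟩)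
    · exact extLt_tt.mp h2
    · exact absurd h2 extLt_tf
  · intro h1; exact Or.inl ⟨extLt_ft, extLt_tt.mpr h1⟩

section SigLemmas
variable {lt : Q → Q → Prop} [IsStrictTotalOrder Q lt]

lemma bf_pair {x y v : Q × Fin 3} (hx2 : x.2 ≠ 2) (hy2 : y.2 ≠ 2) (hv2 : v.2 ≠ 2)
    (hvx : v ≠ x) (hvy : v ≠ y) :
    ind (Bf lt x v) + ind (Bf lt y v) = ind (Btw lt (fC x) (fC y) (fC v)) := by
  rw [ind_congr (bf_iff hx2 hv2), ind_congr (bf_iff hy2 hv2)]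
  exact ind_rel_right (T := ExtLt lt) (fun h1 h2 => extLt_trans h1 h2) extLt_irrefl
    (extLt_trich (lt := lt)) (fC_ne hv2 hx2 hvx) (fC_ne hv2 hy2 hvy)

lemma bg_pair {x y v : Q × Fin 3} (hx2 : x.2 = 2) (hy2 : y.2 = 2) (hv0 : v.2 ≠ 0)
    (hvx : v ≠ x) (hvy : v ≠ y) :
    ind (Bg lt x v) + ind (Bg lt y v) = ind (Btw lt (gC x) (gC y) (gC v)) := by
  rcases fin3_ne0 hv0 with hv | hv
  · rw [gC_eval2 hx2, gC_eval2 hy2, gC_eval1 hv]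
    rw [ind_eq_zero (fun hb : Bg lt x v => absurd (hv.symm.trans hb.2.1) (by decide)),
      ind_eq_zero (fun hb : Bg lt y v => absurd (hv.symm.trans hb.2.1) (by decide)),
      ind_eq_zero btw_tt_f]
    decide
  · rw [gC_eval2 hx2, gC_eval2 hy2, gC_eval2 hv]
    rw [ind_congr (show Bg lt x v ↔ lt x.1 v.1 by simp [Bg, hx2, hv]),
      ind_congr (show Bg lt y v ↔ lt y.1 v.1 by simp [Bg, hy2, hv]),
      ind_congr (show Btw lt (x.1, true) (y.1, true) (v.1, true) ↔
        ((lt x.1 v.1 ∧ lt v.1 y.1) ∨ (lt y.1 v.1 ∧ lt v.1 x.1)) by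
          simp [Btw, extLt_tt])]
    exact ind_rel_left (T := lt) (fun h1 h2 => lt_trans' h1 h2) lt_irrefl'
      (lt_trich' (lt := lt)) (ne_fst hvx (hv.trans hx2.symm)) (ne_fst hvy (hv.trans hy2.symm))

lemma sig_edge_f (hpf : IsPlanar ρ lt f) {l : List (Q × Fin 3)}
    (hc : l.Chain' (GlueEdge ρ f g))
    {x y : Q × Fin 3} (hxl : ∀ v ∈ l, v ≠ x) (hyl : ∀ v ∈ l, v ≠ y)
    (hx2 : x.2 ≠ 2) (hy2 : y.2 ≠ 2)
    (pe : ProfileEdge ρ f (fC x) (fC y) ∨ ProfileEdge ρ f (fC y) (fC x)) :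
    sig ρ lt l x + sig ρ lt l y = 0 := by
  have hw : ∀ a b, GlueEdge ρ f g a b → (a ≠ x ∧ a ≠ y) → (b ≠ x ∧ b ≠ y) →
      wgt ρ lt x a b + wgt ρ lt y a b = (fun _ _ => (0 : ZMod 2)) a b := by
    intro a b hab ⟨hax, hay⟩ ⟨hbx, hby⟩
    rcases glue_classify hab with ⟨hng, ha2, hb2, pe'⟩ | ⟨hg', ha0, hb0, pe'⟩
    · simp only [wgt, if_neg hng]
      have ea := bf_pair (lt := lt) hx2 hy2 ha2 hax hay
      have eb := bf_pair (lt := lt) hx2 hy2 hb2 hbx hby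
      have hiff : Btw lt (fC x) (fC y) (fC a) ↔ Btw lt (fC x) (fC y) (fC b) :=
        noncross hpf pe (Or.inl pe') (fC_ne ha2 hx2 hax) (fC_ne ha2 hy2 hay)
          (fC_ne hb2 hx2 hbx) (fC_ne hb2 hy2 hby)
      have hz : ind (Btw lt (fC x) (fC y) (fC a)) + ind (Btw lt (fC x) (fC y) (fC b)) = 0 := by
        rw [ind_congr hiff]; exact zmod2_self _
      calc ind (Bf lt x a) + ind (Bf lt x b) + (ind (Bf lt y a) + ind (Bf lt y b))
          = (ind (Bf lt x a) + ind (Bf lt y a)) + (ind (Bf lt x b) + ind (Bf lt y b)) := by ring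
        _ = 0 := by rw [ea, eb, hz]
    · simp only [wgt, if_pos hg']
      rw [bg_zero hx2, bg_zero hx2, bg_zero hy2, bg_zero hy2]
      ring
  rw [sig, sig, ← chordSum_add,
    chordSum_congr (P := fun c => c ≠ x ∧ c ≠ y) hw l hc (fun c hcm => ⟨hxl c hcm, hyl c hcm⟩),
    chordSum_zero]

lemma sig_edge_g22 (hpg : IsPlanar ρ lt g) {l : List (Q × Fin 3)}
    (hc : l.Chain' (GlueEdge ρ f g))
    {x y : Q × Fin 3} (hxl : ∀ v ∈ l, v ≠ x) (hyl : ∀ v ∈ l, v ≠ y)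
    (hx2 : x.2 = 2) (hy2 : y.2 = 2)
    (pe : ProfileEdge ρ g (gC x) (gC y) ∨ ProfileEdge ρ g (gC y) (gC x)) :
    sig ρ lt l x + sig ρ lt l y = 0 := by
  have hx0 : x.2 ≠ 0 := by rw [hx2]; decide
  have hy0 : y.2 ≠ 0 := by rw [hy2]; decide
  have hw : ∀ a b, GlueEdge ρ f g a b → (a ≠ x ∧ a ≠ y) → (b ≠ x ∧ b ≠ y) →
      wgt ρ lt x a b + wgt ρ lt y a b = (fun _ _ => (0 : ZMod 2)) a b := by
    intro a b hab ⟨hax, hay⟩ ⟨hbx, hby⟩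
    rcases glue_classify hab with ⟨hng, ha2, hb2, pe'⟩ | ⟨hg', ha0, hb0, pe'⟩
    · simp only [wgt, if_neg hng]
      rw [bf_zero2 hx2, bf_zero2 hx2, bf_zero2 hy2, bf_zero2 hy2]
      ring
    · simp only [wgt, if_pos hg']
      have ea := bg_pair (lt := lt) hx2 hy2 ha0 hax hay
      have eb := bg_pair (lt := lt) hx2 hy2 hb0 hbx hby
      have hiff : Btw lt (gC x) (gC y) (gC a) ↔ Btw lt (gC x) (gC y) (gC b) :=
        noncross hpg pe (Or.inl pe') (gC_ne ha0 hx0 hax) (gC_ne ha0 hy0 hay)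
          (gC_ne hb0 hx0 hbx) (gC_ne hb0 hy0 hby)
      have hz : ind (Btw lt (gC x) (gC y) (gC a)) + ind (Btw lt (gC x) (gC y) (gC b)) = 0 := by
        rw [ind_congr hiff]; exact zmod2_self _
      calc ind (Bg lt x a) + ind (Bg lt x b) + (ind (Bg lt y a) + ind (Bg lt y b))
          = (ind (Bg lt x a) + ind (Bg lt y a)) + (ind (Bg lt x b) + ind (Bg lt y b)) := by ring
        _ = 0 := by rw [ea, eb, hz]
  rw [sig, sig, ← chordSum_add,
    chordSum_congr (P := fun c => c ≠ x ∧ c ≠ y) hw l hc (fun c hcm => ⟨hxl c hcm, hyl c hcm⟩),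
    chordSum_zero]


/-- The characteristic function of the `f`-side interval between `x` and `y`. -/
noncomputable def chiF (lt : Q → Q → Prop) (x y c : Q × Fin 3) : ZMod 2 :=
  ind (Btw lt (fC x) (fC y) (fC c))

/-- The characteristic function of the `g`-side interval between `x` and `y`. -/
noncomputable def chiG (lt : Q → Q → Prop) (x y c : Q × Fin 3) : ZMod 2 :=
  ind (Btw lt (gC x) (gC y) (gC c))

/-- Auxiliary weight for the mixed case. -/
noncomputable def aFun (lt : Q → Q → Prop) (x c : Q × Fin 3) : ZMod 2 :=
  ind (c.2 ≠ 1) + ind (c.2 = 1 ∧ lt c.1 x.1)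

lemma chiF_ne1 {x y c : Q × Fin 3} (hx1 : x.2 = 1) (hy1 : y.2 = 1) (hc : c.2 ≠ 1) :
    chiF lt x y c = 0 := by
  rw [chiF, fC_eval1 hx1, fC_eval1 hy1, fC_evalne1 hc]
  exact ind_eq_zero btw_tt_f

lemma aFun_ne1 {x c : Q × Fin 3} (hc : c.2 ≠ 1) : aFun lt x c = 1 := by
  rw [aFun, ind_eq_one hc, ind_eq_zero (fun hh => hc hh.1)]
  decide

lemma bf1_eval {x : Q × Fin 3} (hx1 : x.2 = 1) {c : Q × Fin 3} (hc2 : c.2 ≠ 2) :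
    ind (Bf lt x c) = aFun lt x c := by
  rcases fin3_ne2 hc2 with e | e
  · have h1 : ind (Bf lt x c) = 1 := ind_eq_one (show Bf lt x c from Or.inr ⟨hx1, Or.inl e⟩)
    have h2 : ind (c.2 ≠ 1) = 1 := ind_eq_one (show c.2 ≠ 1 by rw [e]; decide)
    have h3 : ind (c.2 = 1 ∧ lt c.1 x.1) = 0 :=
      ind_eq_zero (fun hh : c.2 = 1 ∧ lt c.1 x.1 => absurd (e.symm.trans hh.1) (by decide))
    rw [h1, aFun, h2, h3]
    decide
  · have h1 : ind (Bf lt x c) = ind (c.2 = 1 ∧ lt c.1 x.1) :=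
      ind_congr (by simp [Bf, hx1, e])
    have h2 : ind (c.2 ≠ 1) = 0 := ind_eq_zero (fun hh : c.2 ≠ 1 => hh e)
    rw [h1, aFun, h2, zero_add]

lemma sig_edge_g11 (hpg : IsPlanar ρ lt g) {l : List (Q × Fin 3)}
    (hc : l.Chain' (GlueEdge ρ f g)) (hne : l ≠ [])
    (hh : (l.head hne).2 ≠ 1) (hla : (l.getLast hne).2 ≠ 1)
    {x y : Q × Fin 3} (hxl : ∀ v ∈ l, v ≠ x) (hyl : ∀ v ∈ l, v ≠ y)
    (hx1 : x.2 = 1) (hy1 : y.2 = 1)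
    (pe : ProfileEdge ρ g (gC x) (gC y) ∨ ProfileEdge ρ g (gC y) (gC x)) :
    sig ρ lt l x + sig ρ lt l y = 0 := by
  have hx2 : x.2 ≠ 2 := by rw [hx1]; decide
  have hy2 : y.2 ≠ 2 := by rw [hy1]; decide
  have hx0 : x.2 ≠ 0 := by rw [hx1]; decide
  have hy0 : y.2 ≠ 0 := by rw [hy1]; decide
  have htrans : ∀ c : Q × Fin 3, c.2 ≠ 0 → chiF lt x y c = chiG lt x y c := by
    intro c hc0
    rw [chiF, chiG]
    rcases fin3_ne0 hc0 with e | e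
    · rw [fC_eval1 hx1, fC_eval1 hy1, fC_eval1 e, gC_eval1 hx1, gC_eval1 hy1, gC_eval1 e]
      refine ind_congr ?_
      simp only [Btw, extLt_tt, extLt_ff]
      tauto
    · rw [fC_eval1 hx1, fC_eval1 hy1, fC_eval2 e, gC_eval1 hx1, gC_eval1 hy1, gC_eval2 e,
        ind_eq_zero btw_tt_f, ind_eq_zero btw_ff_t]
  have hw : ∀ a b, GlueEdge ρ f g a b → (a ≠ x ∧ a ≠ y) → (b ≠ x ∧ b ≠ y) →
      wgt ρ lt x a b + wgt ρ lt y a b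
        = (fun a b => (chiF lt x y a + chiF lt x y b) +
            (if isG ρ a b then chiF lt x y a + chiF lt x y b else 0)) a b := by
    intro a b hab ⟨hax, hay⟩ ⟨hbx, hby⟩
    rcases glue_classify hab with ⟨hng, ha2, hb2, pe'⟩ | ⟨hg', ha0, hb0, pe'⟩
    · simp only [wgt, if_neg hng]
      have ea := bf_pair (lt := lt) hx2 hy2 ha2 hax hay
      have eb := bf_pair (lt := lt) hx2 hy2 hb2 hbx hby
      calc ind (Bf lt x a) + ind (Bf lt x b) + (ind (Bf lt y a) + ind (Bf lt y b))
          = (ind (Bf lt x a) + ind (Bf lt y a)) + (ind (Bf lt x b) + ind (Bf lt y b)) := by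
            ring
        _ = chiF lt x y a + chiF lt x y b + 0 := by rw [ea, eb, chiF, chiF, add_zero]
    · simp only [wgt, if_pos hg']
      rw [bg_zero hx2, bg_zero hx2, bg_zero hy2, bg_zero hy2]
      have hz : (chiF lt x y a + chiF lt x y b) + (chiF lt x y a + chiF lt x y b) = 0 :=
        zmod2_self _
      rw [hz]
      ring
  obtain ⟨a0, l', rfl⟩ : ∃ a0 l', l = a0 :: l' := by
    cases l with
    | nil => exact absurd rfl hne
    | cons a0 l' => exact ⟨a0, l', rfl⟩
  rw [sig, sig, ← chordSum_add,
    chordSum_congr (P := fun c => c ≠ x ∧ c ≠ y) hw _ hc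
      (fun c hcm => ⟨hxl c hcm, hyl c hcm⟩),
    chordSum_add, chordSum_tele (chiF lt x y) l' a0]
  have e1 : chiF lt x y a0 = 0 := chiF_ne1 hx1 hy1 hh
  have e2 : chiF lt x y ((a0 :: l').getLast (by simp)) = 0 := chiF_ne1 hx1 hy1 hla
  have e3 : chordSum (fun a b => if isG ρ a b then chiF lt x y a + chiF lt x y b else 0)
      (a0 :: l') = 0 := by
    rw [chordSum_congr (w2 := fun _ _ => 0) (P := fun c => c ≠ x ∧ c ≠ y) ?_ _ hc
      (fun c hcm => ⟨hxl c hcm, hyl c hcm⟩), chordSum_zero]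
    intro a b hab ⟨hax, hay⟩ ⟨hbx, hby⟩
    rcases glue_classify hab with ⟨hng, ha2, hb2, pe'⟩ | ⟨hg', ha0, hb0, pe'⟩
    · exact if_neg hng
    · rw [if_pos hg', htrans a ha0, htrans b hb0, chiG, chiG]
      have hiff : Btw lt (gC x) (gC y) (gC a) ↔ Btw lt (gC x) (gC y) (gC b) :=
        noncross hpg pe (Or.inl pe') (gC_ne ha0 hx0 hax) (gC_ne ha0 hy0 hay)
          (gC_ne hb0 hx0 hbx) (gC_ne hb0 hy0 hby)
      rw [ind_congr hiff]
      exact zmod2_self _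
  rw [e1, e2, e3]
  ring

lemma g12_g_endpoint {x y : Q × Fin 3} (hx1 : x.2 = 1) (hy2 : y.2 = 2) {c : Q × Fin 3}
    (hc0 : c.2 ≠ 0) (hcy : c ≠ y) :
    ind (Bg lt y c) = aFun lt x c + chiG lt x y c := by
  rcases fin3_ne0 hc0 with e | e
  · have h1 : ind (Bg lt y c) = 0 :=
      ind_eq_zero (fun hb : Bg lt y c => absurd (e.symm.trans hb.2.1) (by decide))
    have h2 : ind (c.2 ≠ 1) = 0 := ind_eq_zero (fun hh : c.2 ≠ 1 => hh e)
    have h3 : ind (c.2 = 1 ∧ lt c.1 x.1) = ind (lt c.1 x.1) := ind_congr (and_iff_right e)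
    have h4 : ind (Btw lt (gC x) (gC y) (gC c)) = ind (lt c.1 x.1) := by
      rw [gC_eval1 hx1, gC_eval2 hy2, gC_eval1 e]
      exact ind_congr (btw_ft_f (lt := lt))
    rw [h1, aFun, h2, h3, chiG, h4, zero_add]
    exact (zmod2_self _).symm
  · have h1 : ind (Bg lt y c) = ind (lt y.1 c.1) := ind_congr (by simp [Bg, hy2, e])
    have h2 : ind (c.2 ≠ 1) = 1 := ind_eq_one (show c.2 ≠ 1 by rw [e]; decide)
    have h3 : ind (c.2 = 1 ∧ lt c.1 x.1) = 0 :=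
      ind_eq_zero (fun hh : c.2 = 1 ∧ lt c.1 x.1 => absurd (e.symm.trans hh.1) (by decide))
    have h4 : ind (Btw lt (gC x) (gC y) (gC c)) = ind (lt c.1 y.1) := by
      rw [gC_eval1 hx1, gC_eval2 hy2, gC_eval2 e]
      exact ind_congr (btw_ft_t (lt := lt))
    rw [h1, aFun, h2, h3, chiG, h4, add_zero]
    exact ind_lt_flip (ne_fst hcy (e.trans hy2.symm)).symm

lemma sig_edge_g12 (hpg : IsPlanar ρ lt g) {l : List (Q × Fin 3)}
    (hc : l.Chain' (GlueEdge ρ f g)) (hne : l ≠ [])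
    (hh : (l.head hne).2 ≠ 1) (hla : (l.getLast hne).2 ≠ 1)
    {x y : Q × Fin 3} (hxl : ∀ v ∈ l, v ≠ x) (hyl : ∀ v ∈ l, v ≠ y)
    (hx1 : x.2 = 1) (hy2 : y.2 = 2)
    (pe : ProfileEdge ρ g (gC x) (gC y) ∨ ProfileEdge ρ g (gC y) (gC x)) :
    sig ρ lt l x + sig ρ lt l y = 0 := by
  have hx2 : x.2 ≠ 2 := by rw [hx1]; decide
  have hx0 : x.2 ≠ 0 := by rw [hx1]; decide
  have hy0 : y.2 ≠ 0 := by rw [hy2]; decide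
  have hw : ∀ a b, GlueEdge ρ f g a b → (a ≠ x ∧ a ≠ y) → (b ≠ x ∧ b ≠ y) →
      wgt ρ lt x a b + wgt ρ lt y a b
        = (fun a b => (aFun lt x a + aFun lt x b) +
            (if isG ρ a b then chiG lt x y a + chiG lt x y b else 0)) a b := by
    intro a b hab ⟨hax, hay⟩ ⟨hbx, hby⟩
    rcases glue_classify hab with ⟨hng, ha2, hb2, pe'⟩ | ⟨hg', ha0, hb0, pe'⟩
    · simp only [wgt, if_neg hng]
      rw [bf_zero2 hy2, bf_zero2 hy2, bf1_eval hx1 ha2, bf1_eval hx1 hb2]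
      ring
    · simp only [wgt, if_pos hg']
      rw [bg_zero hx2, bg_zero hx2, g12_g_endpoint hx1 hy2 ha0 hay,
        g12_g_endpoint hx1 hy2 hb0 hby]
      ring
  obtain ⟨a0, l', rfl⟩ : ∃ a0 l', l = a0 :: l' := by
    cases l with
    | nil => exact absurd rfl hne
    | cons a0 l' => exact ⟨a0, l', rfl⟩
  rw [sig, sig, ← chordSum_add,
    chordSum_congr (P := fun c => c ≠ x ∧ c ≠ y) hw _ hc
      (fun c hcm => ⟨hxl c hcm, hyl c hcm⟩),
    chordSum_add, chordSum_tele (aFun lt x) l' a0]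
  have e1 : aFun lt x a0 = 1 := aFun_ne1 hh
  have e2 : aFun lt x ((a0 :: l').getLast (by simp)) = 1 := aFun_ne1 hla
  have e3 : chordSum (fun a b => if isG ρ a b then chiG lt x y a + chiG lt x y b else 0)
      (a0 :: l') = 0 := by
    rw [chordSum_congr (w2 := fun _ _ => 0) (P := fun c => c ≠ x ∧ c ≠ y) ?_ _ hc
      (fun c hcm => ⟨hxl c hcm, hyl c hcm⟩), chordSum_zero]
    intro a b hab ⟨hax, hay⟩ ⟨hbx, hby⟩
    rcases glue_classify hab with ⟨hng, ha2, hb2, pe'⟩ | ⟨hg', ha0, hb0, pe'⟩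
    · exact if_neg hng
    · rw [if_pos hg', chiG, chiG]
      have hiff : Btw lt (gC x) (gC y) (gC a) ↔ Btw lt (gC x) (gC y) (gC b) :=
        noncross hpg pe (Or.inl pe') (gC_ne ha0 hx0 hax) (gC_ne ha0 hy0 hay)
          (gC_ne hb0 hx0 hbx) (gC_ne hb0 hy0 hby)
      rw [ind_congr hiff]
      exact zmod2_self _
  rw [e1, e2, e3]
  decide

/-- Lemma A: the side function is constant along a glued edge disjoint
from the path. -/
lemma sig_edge (hpf : IsPlanar ρ lt f) (hpg : IsPlanar ρ lt g) {l : List (Q × Fin 3)}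
    (hc : l.Chain' (GlueEdge ρ f g)) (hne : l ≠ [])
    (hh : (l.head hne).2 ≠ 1) (hla : (l.getLast hne).2 ≠ 1)
    {x y : Q × Fin 3} (hxl : ∀ v ∈ l, v ≠ x) (hyl : ∀ v ∈ l, v ≠ y)
    (he : GlueEdge ρ f g x y) :
    sig ρ lt l x + sig ρ lt l y = 0 := by
  rcases glue_classify he with ⟨_, hx2, hy2, pe⟩ | ⟨_, hx0, hy0, pe⟩
  · exact sig_edge_f hpf hc hxl hyl hx2 hy2 (Or.inl pe)
  · rcases fin3_ne0 hx0 with e1 | e1 <;> rcases fin3_ne0 hy0 with e2 | e2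
    · exact sig_edge_g11 hpg hc hne hh hla hxl hyl e1 e2 (Or.inl pe)
    · exact sig_edge_g12 hpg hc hne hh hla hxl hyl e1 e2 (Or.inl pe)
    · rw [add_comm]
      exact sig_edge_g12 hpg hc hne hh hla hyl hxl e2 e1 (Or.inr pe)
    · exact sig_edge_g22 hpg hc hxl hyl e1 e2 (Or.inl pe)

/-- The side function is constant along a path disjoint from `l`. -/
lemma sig_const (hpf : IsPlanar ρ lt f) (hpg : IsPlanar ρ lt g) {l2 : List (Q × Fin 3)}
    (hc2 : l2.Chain' (GlueEdge ρ f g)) (hne2 : l2 ≠ [])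
    (hh2 : (l2.head hne2).2 ≠ 1) (hla2 : (l2.getLast hne2).2 ≠ 1) :
    ∀ (l1 : List (Q × Fin 3)), l1.Chain' (GlueEdge ρ f g) →
      (∀ t ∈ l1, ∀ t' ∈ l2, t ≠ t') → ∀ (hne1 : l1 ≠ []),
      sig ρ lt l2 (l1.head hne1) = sig ρ lt l2 (l1.getLast hne1) := by
  intro l1
  induction l1 with
  | nil => intro _ _ hne1; exact absurd rfl hne1
  | cons a t ih =>
    intro hc1 hdisj hne1
    cases t with
    | nil => rfl
    | cons b t' =>
      have h1 := List.isChain_cons_cons.mp hc1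
      have hstep : sig ρ lt l2 a = sig ρ lt l2 b := by
        refine zmod2_cancel (sig_edge hpf hpg hc2 hne2 hh2 hla2 ?_ ?_ h1.1)
        · exact fun v hv => (hdisj a (by simp) v hv).symm
        · exact fun v hv => (hdisj b (by simp) v hv).symm
      rw [show (a :: b :: t').head hne1 = a from rfl, List.getLast_cons_cons, hstep]
      exact ih h1.2 (fun t ht t' ht' => hdisj t (List.mem_cons_of_mem a ht) t' ht') (by simp)


/-! ### Lemma B: the endpoints of the path separate interleaved boundary points -/

noncomputable def chiB (lt : Q → Q → Prop) (u v c : Q × Fin 3) : ZMod 2 :=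
  ind (c.2 ≠ 1 ∧ Btw lt (gC u) (gC v) (gC c))

noncomputable def chiB' (lt : Q → Q → Prop) (u v c : Q × Fin 3) : ZMod 2 :=
  ind (c.2 ≠ 1 ∧ ¬ Btw lt (gC u) (gC v) (gC c))

lemma bf0_zero {u c : Q × Fin 3} (hu0 : u.2 = 0) (e : c.2 = 1) : ind (Bf lt u c) = 0 := by
  refine ind_eq_zero ?_
  rintro (⟨_, h2, _⟩ | ⟨h1, _⟩)
  · exact absurd (e.symm.trans h2) (by decide)
  · exact absurd (hu0.symm.trans h1) (by decide)

lemma b00_f_endpoint {u v : Q × Fin 3} (hu0 : u.2 = 0) (hv0 : v.2 = 0) {c : Q × Fin 3}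
    (hc2 : c.2 ≠ 2) (hcu : c ≠ u) (hcv : c ≠ v) :
    ind (Bf lt u c) + ind (Bf lt v c) = chiB lt u v c := by
  rcases fin3_ne2 hc2 with e | e
  · have h1 : ind (Bf lt u c) = ind (lt u.1 c.1) := ind_congr (by simp [Bf, hu0, e])
    have h2 : ind (Bf lt v c) = ind (lt v.1 c.1) := ind_congr (by simp [Bf, hv0, e])
    rw [h1, h2, ind_rel_left (T := lt) (fun ha hb => lt_trans' ha hb) lt_irrefl'
      (lt_trich' (lt := lt)) (ne_fst hcu (e.trans hu0.symm)) (ne_fst hcv (e.trans hv0.symm)),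
      chiB, gC_eval0 hu0, gC_eval0 hv0, gC_eval0 e]
    refine ind_congr ?_
    constructor
    · intro hb
      refine ⟨by rw [e]; decide, ?_⟩
      simp only [Btw, extLt_ff]
      tauto
    · rintro ⟨_, hb⟩
      simp only [Btw, extLt_ff] at hb
      tauto
  · rw [bf0_zero hu0 e, bf0_zero hv0 e, chiB,
      ind_eq_zero (fun hb : c.2 ≠ 1 ∧ _ => hb.1 e)]
    decide

lemma b00_g_endpoint {u v : Q × Fin 3} (hu0 : u.2 = 0) (hv0 : v.2 = 0) {c : Q × Fin 3}
    (hc0 : c.2 ≠ 0) : chiB lt u v c = 0 := by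
  rcases fin3_ne0 hc0 with e | e
  · exact ind_eq_zero (fun hb : c.2 ≠ 1 ∧ _ => hb.1 e)
  · refine ind_eq_zero (fun hb : c.2 ≠ 1 ∧ _ => ?_)
    have hbt := hb.2
    rw [gC_eval0 hu0, gC_eval0 hv0, gC_eval2 e] at hbt
    exact btw_ff_t hbt

lemma b22_g_endpoint {u v : Q × Fin 3} (hu2 : u.2 = 2) (hv2 : v.2 = 2) {c : Q × Fin 3}
    (hc0 : c.2 ≠ 0) (hcu : c ≠ u) (hcv : c ≠ v) :
    ind (Bg lt u c) + ind (Bg lt v c) = chiB lt u v c := by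
  rcases fin3_ne0 hc0 with e | e
  · rw [ind_eq_zero (fun hb : Bg lt u c => absurd (e.symm.trans hb.2.1) (by decide)),
      ind_eq_zero (fun hb : Bg lt v c => absurd (e.symm.trans hb.2.1) (by decide)),
      chiB, ind_eq_zero (fun hb : c.2 ≠ 1 ∧ _ => hb.1 e)]
    decide
  · have h1 : ind (Bg lt u c) = ind (lt u.1 c.1) := ind_congr (by simp [Bg, hu2, e])
    have h2 : ind (Bg lt v c) = ind (lt v.1 c.1) := ind_congr (by simp [Bg, hv2, e])
    rw [h1, h2, ind_rel_left (T := lt) (fun ha hb => lt_trans' ha hb) lt_irrefl'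
      (lt_trich' (lt := lt)) (ne_fst hcu (e.trans hu2.symm)) (ne_fst hcv (e.trans hv2.symm)),
      chiB, gC_eval2 hu2, gC_eval2 hv2, gC_eval2 e]
    refine ind_congr ?_
    constructor
    · intro hb
      refine ⟨by rw [e]; decide, ?_⟩
      simp only [Btw, extLt_tt]
      tauto
    · rintro ⟨_, hb⟩
      simp only [Btw, extLt_tt] at hb
      tauto

lemma b22_f_endpoint {u v : Q × Fin 3} (hu2 : u.2 = 2) (hv2 : v.2 = 2) {c : Q × Fin 3}
    (hc2 : c.2 ≠ 2) : chiB lt u v c = 0 := by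
  rcases fin3_ne2 hc2 with e | e
  · refine ind_eq_zero (fun hb : c.2 ≠ 1 ∧ _ => ?_)
    have hbt := hb.2
    rw [gC_eval2 hu2, gC_eval2 hv2, gC_eval0 e] at hbt
    exact btw_tt_f hbt
  · exact ind_eq_zero (fun hb : c.2 ≠ 1 ∧ _ => hb.1 e)

lemma b02_f_endpoint {u v : Q × Fin 3} (hu0 : u.2 = 0) (hv2 : v.2 = 2) {c : Q × Fin 3}
    (hc2 : c.2 ≠ 2) (hcu : c ≠ u) :
    ind (Bf lt u c) + ind (Bf lt v c) = chiB' lt u v c := by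
  rcases fin3_ne2 hc2 with e | e
  · have h1 : ind (Bf lt u c) = ind (lt u.1 c.1) := ind_congr (by simp [Bf, hu0, e])
    have h4 : ind (Btw lt (gC u) (gC v) (gC c)) = ind (lt c.1 u.1) := by
      rw [gC_eval0 hu0, gC_eval2 hv2, gC_eval0 e]
      exact ind_congr (btw_ft_f (lt := lt))
    have h5 : chiB' lt u v c = 1 + ind (lt c.1 u.1) := by
      rw [chiB', ind_congr (and_iff_right (show c.2 ≠ 1 by rw [e]; decide)), ind_not, h4]
    rw [h1, bf_zero2 hv2, h5, add_zero]
    exact ind_lt_flip (ne_fst hcu (e.trans hu0.symm)).symm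
  · rw [bf0_zero hu0 e, bf_zero2 hv2, chiB', ind_eq_zero (fun hb : c.2 ≠ 1 ∧ _ => hb.1 e)]
    decide

lemma b02_g_endpoint {u v : Q × Fin 3} (hu0 : u.2 = 0) (hv2 : v.2 = 2) {c : Q × Fin 3}
    (hc0 : c.2 ≠ 0) (hcv : c ≠ v) :
    ind (Bg lt u c) + ind (Bg lt v c) = chiB' lt u v c := by
  have hu2 : u.2 ≠ 2 := by rw [hu0]; decide
  rcases fin3_ne0 hc0 with e | e
  · rw [bg_zero hu2, ind_eq_zero (fun hb : Bg lt v c => absurd (e.symm.trans hb.2.1) (by decide)),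
      chiB', ind_eq_zero (fun hb : c.2 ≠ 1 ∧ _ => hb.1 e)]
    decide
  · have h1 : ind (Bg lt v c) = ind (lt v.1 c.1) := ind_congr (by simp [Bg, hv2, e])
    have h4 : ind (Btw lt (gC u) (gC v) (gC c)) = ind (lt c.1 v.1) := by
      rw [gC_eval0 hu0, gC_eval2 hv2, gC_eval2 e]
      exact ind_congr (btw_ft_t (lt := lt))
    have h5 : chiB' lt u v c = 1 + ind (lt c.1 v.1) := by
      rw [chiB', ind_congr (and_iff_right (show c.2 ≠ 1 by rw [e]; decide)), ind_not, h4]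
    rw [bg_zero hu2, h1, h5, zero_add]
    exact ind_lt_flip (ne_fst hcv (e.trans hv2.symm)).symm


lemma sig_ends00 {l : List (Q × Fin 3)} (hc : l.Chain' (GlueEdge ρ f g)) (hne : l ≠ [])
    (hh : (l.head hne).2 ≠ 1) (hla : (l.getLast hne).2 ≠ 1)
    {u v : Q × Fin 3} (hu0 : u.2 = 0) (hv0 : v.2 = 0)
    (hul : ∀ t ∈ l, t ≠ u) (hvl : ∀ t ∈ l, t ≠ v) :
    sig ρ lt l u + sig ρ lt l v =
      ind (Btw lt (gC u) (gC v) (gC (l.head hne))) +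
      ind (Btw lt (gC u) (gC v) (gC (l.getLast hne))) := by
  have hu2 : u.2 ≠ 2 := by rw [hu0]; decide
  have hv2 : v.2 ≠ 2 := by rw [hv0]; decide
  have hw : ∀ a b, GlueEdge ρ f g a b → (a ≠ u ∧ a ≠ v) → (b ≠ u ∧ b ≠ v) →
      wgt ρ lt u a b + wgt ρ lt v a b
        = (fun a b => chiB lt u v a + chiB lt u v b) a b := by
    intro a b hab ⟨hau, hav⟩ ⟨hbu, hbv⟩
    rcases glue_classify hab with ⟨hng, ha2, hb2, pe'⟩ | ⟨hg', ha0, hb0, pe'⟩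
    · simp only [wgt, if_neg hng]
      have ea := b00_f_endpoint (lt := lt) hu0 hv0 ha2 hau hav
      have eb := b00_f_endpoint (lt := lt) hu0 hv0 hb2 hbu hbv
      calc ind (Bf lt u a) + ind (Bf lt u b) + (ind (Bf lt v a) + ind (Bf lt v b))
          = (ind (Bf lt u a) + ind (Bf lt v a)) + (ind (Bf lt u b) + ind (Bf lt v b)) := by
            ring
        _ = chiB lt u v a + chiB lt u v b := by rw [ea, eb]
    · simp only [wgt, if_pos hg']
      rw [bg_zero hu2, bg_zero hu2, bg_zero hv2, bg_zero hv2,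
        b00_g_endpoint (lt := lt) hu0 hv0 ha0, b00_g_endpoint (lt := lt) hu0 hv0 hb0]
      ring
  obtain ⟨a0, l', rfl⟩ : ∃ a0 l', l = a0 :: l' := by
    cases l with
    | nil => exact absurd rfl hne
    | cons a0 l' => exact ⟨a0, l', rfl⟩
  rw [sig, sig, ← chordSum_add,
    chordSum_congr (P := fun c => c ≠ u ∧ c ≠ v) hw _ hc
      (fun c hcm => ⟨hul c hcm, hvl c hcm⟩),
    chordSum_tele (chiB lt u v) l' a0]
  have e1 : chiB lt u v a0 = ind (Btw lt (gC u) (gC v) (gC a0)) := ind_congr (and_iff_right hh)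
  have e2 : chiB lt u v ((a0 :: l').getLast (by simp))
      = ind (Btw lt (gC u) (gC v) (gC ((a0 :: l').getLast (by simp)))) :=
    ind_congr (and_iff_right hla)
  rw [e1, e2]
  rfl

lemma sig_ends22 {l : List (Q × Fin 3)} (hc : l.Chain' (GlueEdge ρ f g)) (hne : l ≠ [])
    (hh : (l.head hne).2 ≠ 1) (hla : (l.getLast hne).2 ≠ 1)
    {u v : Q × Fin 3} (hu2 : u.2 = 2) (hv2 : v.2 = 2)
    (hul : ∀ t ∈ l, t ≠ u) (hvl : ∀ t ∈ l, t ≠ v) :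
    sig ρ lt l u + sig ρ lt l v =
      ind (Btw lt (gC u) (gC v) (gC (l.head hne))) +
      ind (Btw lt (gC u) (gC v) (gC (l.getLast hne))) := by
  have hw : ∀ a b, GlueEdge ρ f g a b → (a ≠ u ∧ a ≠ v) → (b ≠ u ∧ b ≠ v) →
      wgt ρ lt u a b + wgt ρ lt v a b
        = (fun a b => chiB lt u v a + chiB lt u v b) a b := by
    intro a b hab ⟨hau, hav⟩ ⟨hbu, hbv⟩
    rcases glue_classify hab with ⟨hng, ha2, hb2, pe'⟩ | ⟨hg', ha0, hb0, pe'⟩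
    · simp only [wgt, if_neg hng]
      rw [bf_zero2 hu2, bf_zero2 hu2, bf_zero2 hv2, bf_zero2 hv2,
        b22_f_endpoint (lt := lt) hu2 hv2 ha2, b22_f_endpoint (lt := lt) hu2 hv2 hb2]
      ring
    · simp only [wgt, if_pos hg']
      have ea := b22_g_endpoint (lt := lt) hu2 hv2 ha0 hau hav
      have eb := b22_g_endpoint (lt := lt) hu2 hv2 hb0 hbu hbv
      calc ind (Bg lt u a) + ind (Bg lt u b) + (ind (Bg lt v a) + ind (Bg lt v b))
          = (ind (Bg lt u a) + ind (Bg lt v a)) + (ind (Bg lt u b) + ind (Bg lt v b)) := by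
            ring
        _ = chiB lt u v a + chiB lt u v b := by rw [ea, eb]
  obtain ⟨a0, l', rfl⟩ : ∃ a0 l', l = a0 :: l' := by
    cases l with
    | nil => exact absurd rfl hne
    | cons a0 l' => exact ⟨a0, l', rfl⟩
  rw [sig, sig, ← chordSum_add,
    chordSum_congr (P := fun c => c ≠ u ∧ c ≠ v) hw _ hc
      (fun c hcm => ⟨hul c hcm, hvl c hcm⟩),
    chordSum_tele (chiB lt u v) l' a0]
  have e1 : chiB lt u v a0 = ind (Btw lt (gC u) (gC v) (gC a0)) := ind_congr (and_iff_right hh)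
  have e2 : chiB lt u v ((a0 :: l').getLast (by simp))
      = ind (Btw lt (gC u) (gC v) (gC ((a0 :: l').getLast (by simp)))) :=
    ind_congr (and_iff_right hla)
  rw [e1, e2]
  rfl

lemma sig_ends02 {l : List (Q × Fin 3)} (hc : l.Chain' (GlueEdge ρ f g)) (hne : l ≠ [])
    (hh : (l.head hne).2 ≠ 1) (hla : (l.getLast hne).2 ≠ 1)
    {u v : Q × Fin 3} (hu0 : u.2 = 0) (hv2 : v.2 = 2)
    (hul : ∀ t ∈ l, t ≠ u) (hvl : ∀ t ∈ l, t ≠ v) :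
    sig ρ lt l u + sig ρ lt l v =
      ind (Btw lt (gC u) (gC v) (gC (l.head hne))) +
      ind (Btw lt (gC u) (gC v) (gC (l.getLast hne))) := by
  have hu2 : u.2 ≠ 2 := by rw [hu0]; decide
  have hw : ∀ a b, GlueEdge ρ f g a b → (a ≠ u ∧ a ≠ v) → (b ≠ u ∧ b ≠ v) →
      wgt ρ lt u a b + wgt ρ lt v a b
        = (fun a b => chiB' lt u v a + chiB' lt u v b) a b := by
    intro a b hab ⟨hau, hav⟩ ⟨hbu, hbv⟩
    rcases glue_classify hab with ⟨hng, ha2, hb2, pe'⟩ | ⟨hg', ha0, hb0, pe'⟩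
    · simp only [wgt, if_neg hng]
      have ea := b02_f_endpoint (lt := lt) hu0 hv2 ha2 hau
      have eb := b02_f_endpoint (lt := lt) hu0 hv2 hb2 hbu
      calc ind (Bf lt u a) + ind (Bf lt u b) + (ind (Bf lt v a) + ind (Bf lt v b))
          = (ind (Bf lt u a) + ind (Bf lt v a)) + (ind (Bf lt u b) + ind (Bf lt v b)) := by
            ring
        _ = chiB' lt u v a + chiB' lt u v b := by rw [ea, eb]
    · simp only [wgt, if_pos hg']
      have ea := b02_g_endpoint (lt := lt) hu0 hv2 ha0 hav
      have eb := b02_g_endpoint (lt := lt) hu0 hv2 hb0 hbv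
      calc ind (Bg lt u a) + ind (Bg lt u b) + (ind (Bg lt v a) + ind (Bg lt v b))
          = (ind (Bg lt u a) + ind (Bg lt v a)) + (ind (Bg lt u b) + ind (Bg lt v b)) := by
            ring
        _ = chiB' lt u v a + chiB' lt u v b := by rw [ea, eb]
  obtain ⟨a0, l', rfl⟩ : ∃ a0 l', l = a0 :: l' := by
    cases l with
    | nil => exact absurd rfl hne
    | cons a0 l' => exact ⟨a0, l', rfl⟩
  rw [sig, sig, ← chordSum_add,
    chordSum_congr (P := fun c => c ≠ u ∧ c ≠ v) hw _ hc
      (fun c hcm => ⟨hul c hcm, hvl c hcm⟩),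
    chordSum_tele (chiB' lt u v) l' a0]
  have hh' : a0.2 ≠ 1 := hh
  have hla' : ((a0 :: l').getLast (by simp)).2 ≠ 1 := hla
  have e1 : chiB' lt u v a0 = 1 + ind (Btw lt (gC u) (gC v) (gC a0)) := by
    rw [chiB', ind_congr (and_iff_right hh'), ind_not]
  have e2 : chiB' lt u v ((a0 :: l').getLast (by simp))
      = 1 + ind (Btw lt (gC u) (gC v) (gC ((a0 :: l').getLast (by simp)))) := by
    rw [chiB', ind_congr (and_iff_right hla'), ind_not]
  rw [e1, e2]
  have harith : ∀ a b : ZMod 2, (1 + a) + (1 + b) = a + b := by decide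
  exact (harith _ _).trans rfl

/-- Lemma B, assembled. -/
lemma sig_ends {l : List (Q × Fin 3)} (hc : l.Chain' (GlueEdge ρ f g)) (hne : l ≠ [])
    (hh : (l.head hne).2 ≠ 1) (hla : (l.getLast hne).2 ≠ 1)
    {u v : Q × Fin 3} (hu1 : u.2 ≠ 1) (hv1 : v.2 ≠ 1)
    (hul : ∀ t ∈ l, t ≠ u) (hvl : ∀ t ∈ l, t ≠ v) :
    sig ρ lt l u + sig ρ lt l v =
      ind (Btw lt (gC u) (gC v) (gC (l.head hne))) +
      ind (Btw lt (gC u) (gC v) (gC (l.getLast hne))) := by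
  rcases fin3_ne1 hu1 with e1 | e1 <;> rcases fin3_ne1 hv1 with e2 | e2
  · exact sig_ends00 hc hne hh hla e1 e2 hul hvl
  · exact sig_ends02 hc hne hh hla e1 e2 hul hvl
  · have hsw := sig_ends02 (lt := lt) hc hne hh hla e2 e1 hvl hul
    have hb1 : ind (Btw lt (gC v) (gC u) (gC (l.head hne)))
        = ind (Btw lt (gC u) (gC v) (gC (l.head hne))) := ind_congr btw_comm
    have hb2 : ind (Btw lt (gC v) (gC u) (gC (l.getLast hne)))
        = ind (Btw lt (gC u) (gC v) (gC (l.getLast hne))) := ind_congr btw_comm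
    rw [add_comm (sig ρ lt l u) (sig ρ lt l v), hsw, hb1, hb2]
  · exact sig_ends22 hc hne hh hla e1 e2 hul hvl

end SigLemmas






/-! ### Determinism of the gluing -/

lemma glue_det (hf : IsDet f) (hg : IsDet g) : IsDet (glue ρ f g) := by
  intro q r r' h1 h2
  have h1' : Relation.ReflTransGen (GlueEdge ρ f g) (port (q, !ρ q)) (port (r, ρ r)) := by
    have h0 : Relation.ReflTransGen (GlueEdge ρ f g)
        (q, if ρ q then (0 : Fin 3) else 2) (r, if ρ r then (2 : Fin 3) else 0) := h1
    rwa [start_eq, end_eq] at h0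
  have h2' : Relation.ReflTransGen (GlueEdge ρ f g) (port (q, !ρ q)) (port (r', ρ r')) := by
    have h0 : Relation.ReflTransGen (GlueEdge ρ f g)
        (q, if ρ q then (0 : Fin 3) else 2) (r', if ρ r' then (2 : Fin 3) else 0) := h2
    rwa [start_eq, end_eq] at h0
  have hsame := rtg_unique_sink (R := GlueEdge ρ f g)
    (fun {x y y'} hx hy => out_unique hf hg hx hy) (end_sink r) (end_sink r') h1' h2'
  have := port_inj hsame
  exact congrArg Prod.fst this

/-! ### Determinism and planarity of the identity -/

lemma idRel_det : IsDet (idRel Q) := by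
  intro q r r' h1 h2
  exact (h1 : q = r).symm.trans (h2 : q = r')

section IdPlanar
variable {lt : Q → Q → Prop} [IsStrictTotalOrder Q lt]

lemma idRel_planar : IsPlanar ρ lt (idRel Q) := by
  rintro ⟨u, r, v, s, hur, hrv, hvs, he1, he2⟩
  have hid : ∀ a b : Q × Bool,
      (ProfileEdge ρ (idRel Q) a b ∨ ProfileEdge ρ (idRel Q) b a) →
      a.1 = b.1 ∧ a.2 = !b.2 := by
    rintro a b (⟨p, hp, ha, hb⟩ | ⟨p, hp, hb, ha⟩)
    · have hp' : p.1 = p.2 := hp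
      rw [ha, hb]
      exact ⟨hp', by simp [hp']⟩
    · have hp' : p.1 = p.2 := hp
      rw [ha, hb]
      exact ⟨hp'.symm, by simp [hp']⟩
  obtain ⟨he1a, he1b⟩ := hid u v he1
  obtain ⟨he2a, he2b⟩ := hid r s he2
  obtain ⟨uq, ub⟩ := u; obtain ⟨rq, rb⟩ := r; obtain ⟨vq, vb⟩ := v; obtain ⟨sq, sb⟩ := s
  simp only at he1a he1b he2a he2b
  subst he1a
  subst he2a
  subst he1b
  subst he2b
  cases vb <;> cases sb <;> simp only [Bool.not_false, Bool.not_true] at hur hrv hvs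
  · exact extLt_tf hrv
  · exact extLt_tf hur
  · exact extLt_tf hvs
  · exact lt_asymm' (extLt_tt.mp hvs) (extLt_ff.mp hur)

/-! ### Planarity of the gluing -/

lemma glue_planar (hdf : IsDet f) (hdg : IsDet g)
    (hpf : IsPlanar ρ lt f) (hpg : IsPlanar ρ lt g) :
    IsPlanar ρ lt (glue ρ f g) := by
  rintro ⟨u, r, v, s, hur, hrv, hvs, he1, he2⟩
  have hurv : ExtLt lt u v := extLt_trans hur hrv
  have hus : ExtLt lt u s := extLt_trans hurv hvs
  have hne_ur : u ≠ r := fun h => extLt_irrefl r (h ▸ hur)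
  have hne_us : u ≠ s := fun h => extLt_irrefl s (h ▸ hus)
  have hne_rv : r ≠ v := fun h => extLt_irrefl v (h ▸ hrv)
  have hne_vs : v ≠ s := fun h => extLt_irrefl s (h ▸ hvs)
  have main : ∀ a b : Q × Bool, ProfileEdge ρ (glue ρ f g) a b →
      ∃ (l : List (Q × Fin 3)) (hne : l ≠ []), l.Chain' (GlueEdge ρ f g) ∧
        (l.head hne = port a ∧ l.getLast hne = port b) ∧
        (∀ w, ¬ GlueEdge ρ f g (l.getLast hne) w) := by
    intro a b pe
    obtain ⟨hm, ha2, hb2⟩ := profileEdge_iff.mp pe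
    have hea : ((a.1, !ρ a.1) : Q × Bool) = a := Prod.ext_iff.mpr ⟨rfl, ha2.symm⟩
    have heb : ((b.1, ρ b.1) : Q × Bool) = b := Prod.ext_iff.mpr ⟨rfl, hb2.symm⟩
    have hrtg : Relation.ReflTransGen (GlueEdge ρ f g) (port a) (port b) := by
      have h0 : Relation.ReflTransGen (GlueEdge ρ f g)
          (a.1, if ρ a.1 then (0 : Fin 3) else 2) (b.1, if ρ b.1 then (2 : Fin 3) else 0) := hm
      rwa [start_eq, end_eq, hea, heb] at h0
    obtain ⟨l, hch, hne, hh, hl⟩ := rtg_list hrtg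
    refine ⟨l, hne, hch, ⟨hh, hl⟩, ?_⟩
    rw [hl, ← heb]
    exact fun w => end_sink b.1 w
  have hmk : ∀ {a b : Q × Bool},
      (ProfileEdge ρ (glue ρ f g) a b ∨ ProfileEdge ρ (glue ρ f g) b a) →
      ∃ (l : List (Q × Fin 3)) (hne : l ≠ []), l.Chain' (GlueEdge ρ f g) ∧
        ((l.head hne = port a ∧ l.getLast hne = port b) ∨
          (l.head hne = port b ∧ l.getLast hne = port a)) ∧
        (∀ w, ¬ GlueEdge ρ f g (l.getLast hne) w) := by
    rintro a b (pe | pe)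
    · obtain ⟨l, hne, h1, h2, h3⟩ := main a b pe; exact ⟨l, hne, h1, Or.inl h2, h3⟩
    · obtain ⟨l, hne, h1, h2, h3⟩ := main b a pe; exact ⟨l, hne, h1, Or.inr h2, h3⟩
  obtain ⟨l1, hne1, hc1, hor1, hsink1⟩ := hmk he1
  obtain ⟨l2, hne2, hc2, hor2, hsink2⟩ := hmk he2
  have hdisj : ∀ t ∈ l1, ∀ t' ∈ l2, t ≠ t' := by
    by_contra hcon
    push_neg at hcon
    obtain ⟨t, ht1, t', ht2, heq⟩ := hcon
    subst heq
    have hsame := rtg_unique_sink (R := GlueEdge ρ f g)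
      (fun {x y y'} hx hy => out_unique hdf hdg hx hy)
      hsink1 hsink2 (chain_mem_rtg hc1 ht1 hne1) (chain_mem_rtg hc2 ht2 hne2)
    have h1' : l1.getLast hne1 = port u ∨ l1.getLast hne1 = port v := by
      rcases hor1 with ⟨_, hl⟩ | ⟨_, hl⟩; exacts [Or.inr hl, Or.inl hl]
    have h2' : l2.getLast hne2 = port r ∨ l2.getLast hne2 = port s := by
      rcases hor2 with ⟨_, hl⟩ | ⟨_, hl⟩; exacts [Or.inr hl, Or.inl hl]
    rcases h1' with hL | hL <;> rcases h2' with hR | hR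
    · exact hne_ur (port_inj ((hL.symm.trans hsame).trans hR))
    · exact hne_us (port_inj ((hL.symm.trans hsame).trans hR))
    · exact hne_rv (port_inj ((hR.symm.trans hsame.symm).trans hL))
    · exact hne_vs (port_inj ((hL.symm.trans hsame).trans hR))
  have hh2ne1 : (l2.head hne2).2 ≠ 1 := by
    rcases hor2 with ⟨hh', _⟩ | ⟨hh', _⟩ <;> rw [hh'] <;> exact port_ne1 _
  have hla2ne1 : (l2.getLast hne2).2 ≠ 1 := by
    rcases hor2 with ⟨_, hl'⟩ | ⟨_, hl'⟩ <;> rw [hl'] <;> exact port_ne1 _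
  have hconst := sig_const (lt := lt) hpf hpg hc2 hne2 hh2ne1 hla2ne1 l1 hc1 hdisj hne1
  have hsiguv : sig ρ lt l2 (port u) = sig ρ lt l2 (port v) := by
    rcases hor1 with ⟨hh', hl'⟩ | ⟨hh', hl'⟩
    · rw [← hh', ← hl']; exact hconst
    · rw [← hh', ← hl']; exact hconst.symm
  have hul2 : ∀ t ∈ l2, t ≠ port u := by
    intro t ht
    rcases hor1 with ⟨hh', _⟩ | ⟨_, hl'⟩
    · exact fun he => (hdisj _ (hh' ▸ List.head_mem hne1) t ht) he.symm
    · exact fun he => (hdisj _ (hl' ▸ List.getLast_mem hne1) t ht) he.symm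
  have hvl2 : ∀ t ∈ l2, t ≠ port v := by
    intro t ht
    rcases hor1 with ⟨_, hl'⟩ | ⟨hh', _⟩
    · exact fun he => (hdisj _ (hl' ▸ List.getLast_mem hne1) t ht) he.symm
    · exact fun he => (hdisj _ (hh' ▸ List.head_mem hne1) t ht) he.symm
  have hB := sig_ends (lt := lt) hc2 hne2 hh2ne1 hla2ne1 (port_ne1 u) (port_ne1 v) hul2 hvl2
  have hbtw_r : Btw lt u v r := Or.inl ⟨hur, hrv⟩
  have hbtw_s : ¬ Btw lt u v s := by
    rintro (⟨h1', h2'⟩ | ⟨h1', h2'⟩)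
    · exact extLt_asymm hvs h2'
    · exact extLt_asymm hus h2'
  have hval : ind (Btw lt (gC (port u)) (gC (port v)) (gC (l2.head hne2))) +
      ind (Btw lt (gC (port u)) (gC (port v)) (gC (l2.getLast hne2))) = 1 := by
    rcases hor2 with ⟨hh', hl'⟩ | ⟨hh', hl'⟩
    · rw [hh', hl']
      simp only [gC_port]
      rw [ind_eq_one hbtw_r, ind_eq_zero hbtw_s]
      decide
    · rw [hh', hl']
      simp only [gC_port]
      rw [ind_eq_zero hbtw_s, ind_eq_one hbtw_r]
      decide
  have hcontra : (0 : ZMod 2) = 1 := by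
    calc (0 : ZMod 2) = sig ρ lt l2 (port v) + sig ρ lt l2 (port v) := (zmod2_self _).symm
      _ = sig ρ lt l2 (port u) + sig ρ lt l2 (port v) := by rw [hsiguv]
      _ = 1 := hB.trans hval
  exact absurd hcontra (by decide)

end IdPlanar

end Statement3Helpers





/-- deterministic planar transitions are closed under gluing
composition, and the identity relation is deterministic and planar. -/
theorem det_planar_closed_under_glue {Q : Type} [Fintype Q] (ρ : Q → Bool)
    (lt : Q → Q → Prop) [IsStrictTotalOrder Q lt] :
    (∀ f g : Set (Q × Q), IsDet f → IsPlanar ρ lt f → IsDet g → IsPlanar ρ lt g →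
      IsDet (glue ρ f g) ∧ IsPlanar ρ lt (glue ρ f g)) ∧
    (IsDet (idRel Q) ∧ IsPlanar ρ lt (idRel Q)) := by
  refine ⟨fun f g hdf hpf hdg hpg => ⟨glue_det hdf hdg, glue_planar hdf hdg hpf hpg⟩,
    idRel_det, idRel_planar⟩
end Planar2DFT
end

section
/- Let (Q,ρ) be a directed set of states and f ⊆ Q×Q a deterministic transition. Partition f into f↢ = f ∩ (Q→×Q←), f↣ = f ∩ (Q←×Q→) and f↔ = f \ (f↢ ∪ f↣), and set f⊣ = f↢ ∪ {(q,q) | q ∈ Q has no image under f↢} and f⊢ = f↣ ∪ {(q,q) | q ∈ Q has no image under f↣}. Then f = f⊣ * f↔ * f⊢, where * denotes the gluing composition of transitions. -/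
namespace Planar2DFT

/-- `f↢ = f ∩ (Q→ × Q←)`. -/
def partRL {Q : Type} (ρ : Q → Bool) (f : Set (Q × Q)) : Set (Q × Q) :=
  {p ∈ f | ρ p.1 = true ∧ ρ p.2 = false}

/-- `f↣ = f ∩ (Q← × Q→)`. -/
def partLR {Q : Type} (ρ : Q → Bool) (f : Set (Q × Q)) : Set (Q × Q) :=
  {p ∈ f | ρ p.1 = false ∧ ρ p.2 = true}

/-- `f↔ = f \ (f↢ ∪ f↣)`. -/
def partKeep {Q : Type} (ρ : Q → Bool) (f : Set (Q × Q)) : Set (Q × Q) :=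
  f \ (partRL ρ f ∪ partLR ρ f)

/-- `f⊣ = f↢ ∪ {(q,q) | q has no image under f↢}`. -/
def partDashv {Q : Type} (ρ : Q → Bool) (f : Set (Q × Q)) : Set (Q × Q) :=
  partRL ρ f ∪ {p | p.1 = p.2 ∧ ¬ ∃ r, (p.1, r) ∈ partRL ρ f}

/-- `f⊢ = f↣ ∪ {(q,q) | q has no image under f↣}`. -/
def partVdash {Q : Type} (ρ : Q → Bool) (f : Set (Q × Q)) : Set (Q × Q) :=
  partLR ρ f ∪ {p | p.1 = p.2 ∧ ¬ ∃ r, (p.1, r) ∈ partLR ρ f}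

/-!
In the glued graph `C(ρ, F, G)`, with entry vertices `(q, if ρ q then 0 else 2)` and exit
vertices `(r, if ρ r then 2 else 0)`, the exit vertices are sinks and every edge lands either on an
exit vertex or on the middle level. If `F` has no `↣`-pairs and `G` no `↢`-pairs, an edge leaving
the middle level lands on an exit vertex, so every path has at most two edges and `F * G` is
given by one explicit formula for each pair of directions of its endpoints. With these formulas,
`f⊣ * f↔ = f \ f↣` and `(f \ f↣) * f⊢ = f`; determinism of `f` is what makes `(q, q)` belong to
`f⊣` (resp. `f⊢`) when `f` sends `q` to a forward (resp. backward) state.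
-/

section Glue

variable {Q : Type} {ρ : Q → Bool} {F G : Set (Q × Q)}

lemma glueEdge_iff {x y : Q} {i j : Fin 3} :
    GlueEdge ρ F G (x, i) (y, j) ↔
      ((x, y) ∈ F ∧ i = (if ρ x then 0 else 1) ∧ j = (if ρ y then 1 else 0)) ∨
      ((x, y) ∈ G ∧ i = (if ρ x then 1 else 2) ∧ j = (if ρ y then 2 else 1)) := by
  simp only [GlueEdge, ProfileEdge, Prod.ext_iff]
  cases hx : ρ x <;> cases hy : ρ y <;> fin_cases i <;> fin_cases j <;> simp [hx, hy]

lemma glueEdge_target_level {x y : Q} {i j : Fin 3} (h : GlueEdge ρ F G (x, i) (y, j)) :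
    j = 1 ∨ j = if ρ y then 2 else 0 := by
  rw [glueEdge_iff] at h
  rcases h with ⟨-, -, rfl⟩ | ⟨-, -, rfl⟩ <;> cases ρ y <;> simp

lemma eq_of_reflTransGen_glueEdge_from_exit {r : Q} {v : Q × Fin 3}
    (h : Relation.ReflTransGen (GlueEdge ρ F G) (r, if ρ r then 2 else 0) v) :
    v = (r, if ρ r then 2 else 0) := by
  rcases h.cases_head with h | ⟨⟨y, j⟩, hedge, -⟩
  · exact h.symm
  · rw [glueEdge_iff] at hedge
    cases hr : ρ r <;> simp [hr] at hedge

lemma glueEdge_from_middle_level (hF : partLR ρ F = ∅) (hG : partRL ρ G = ∅)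
    {x y : Q} {j : Fin 3} (h : GlueEdge ρ F G (x, 1) (y, j)) :
    j = if ρ y then 2 else 0 := by
  rw [glueEdge_iff] at h
  rcases h with ⟨hxy, hi, rfl⟩ | ⟨hxy, hi, rfl⟩
  · have hx : ρ x = false := by cases h : ρ x <;> simp_all
    have hy : ρ y = false := by
      by_contra hy
      exact hF.subset ⟨hxy, hx, by simpa using hy⟩
    simp [hy]
  · have hx : ρ x = true := by cases h : ρ x <;> simp_all
    have hy : ρ y = true := by
      by_contra hy
      exact hG.subset ⟨hxy, hx, by simpa using hy⟩
    simp [hy]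

lemma mem_glue_iff_of_partLR_of_partRL (hF : partLR ρ F = ∅) (hG : partRL ρ G = ∅)
    {q r : Q} :
    (q, r) ∈ glue ρ F G ↔
      GlueEdge ρ F G (q, if ρ q then 0 else 2) (r, if ρ r then 2 else 0) ∨
      ∃ x, GlueEdge ρ F G (q, if ρ q then 0 else 2) (x, 1) ∧
        GlueEdge ρ F G (x, 1) (r, if ρ r then 2 else 0) := by
  constructor
  · intro h
    rcases h.cases_head with hst | ⟨⟨y, j⟩, hsy, hyt⟩
    · simp only [Prod.mk.injEq] at hst
      obtain ⟨rfl, h⟩ := hst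
      cases hq : ρ q <;> simp [hq] at h
    rcases glueEdge_target_level hsy with rfl | rfl
    · rcases hyt.cases_head with hyt | ⟨⟨z, k⟩, hyz, hzt⟩
      · cases hr : ρ r <;> simp [hr] at hyt
      obtain rfl := glueEdge_from_middle_level hF hG hyz
      obtain ⟨rfl, -⟩ := Prod.mk.inj (eq_of_reflTransGen_glueEdge_from_exit hzt)
      exact Or.inr ⟨y, hsy, hyz⟩
    · obtain ⟨rfl, -⟩ := Prod.mk.inj (eq_of_reflTransGen_glueEdge_from_exit hyt)
      exact Or.inl hsy
  · rintro (h | ⟨x, h₁, h₂⟩)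
    · exact .single h
    · exact .head h₁ (.single h₂)

section Directions

variable (hF : partLR ρ F = ∅) (hG : partRL ρ G = ∅) {q r : Q}
include hF hG

lemma mem_glue_iff_of_fwd_bwd (hq : ρ q = true) (hr : ρ r = false) :
    (q, r) ∈ glue ρ F G ↔ (q, r) ∈ F := by
  rw [mem_glue_iff_of_partLR_of_partRL hF hG]
  simp +contextual [glueEdge_iff, hq, hr]

lemma mem_glue_iff_of_bwd_fwd (hq : ρ q = false) (hr : ρ r = true) :
    (q, r) ∈ glue ρ F G ↔ (q, r) ∈ G := by
  rw [mem_glue_iff_of_partLR_of_partRL hF hG]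
  simp +contextual [glueEdge_iff, hq, hr]

lemma mem_glue_iff_of_fwd_fwd (hq : ρ q = true) (hr : ρ r = true) :
    (q, r) ∈ glue ρ F G ↔ ∃ x, ρ x = true ∧ (q, x) ∈ F ∧ (x, r) ∈ G := by
  rw [mem_glue_iff_of_partLR_of_partRL hF hG]
  simp only [glueEdge_iff, hq, hr]
  simp +contextual [and_comm, and_left_comm, and_assoc]

lemma mem_glue_iff_of_bwd_bwd (hq : ρ q = false) (hr : ρ r = false) :
    (q, r) ∈ glue ρ F G ↔ ∃ x, ρ x = false ∧ (q, x) ∈ G ∧ (x, r) ∈ F := by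
  rw [mem_glue_iff_of_partLR_of_partRL hF hG]
  simp only [glueEdge_iff, hq, hr]
  simp +contextual [and_comm, and_left_comm, and_assoc]

end Directions

end Glue

section Decomposition

variable {Q : Type} {ρ : Q → Bool} {f : Set (Q × Q)} {q r : Q}

lemma partLR_partDashv : partLR ρ (partDashv ρ f) = ∅ := by
  ext ⟨q, r⟩
  grind [partLR, partDashv, partRL]

lemma partRL_partKeep : partRL ρ (partKeep ρ f) = ∅ := by
  ext ⟨q, r⟩
  grind [partRL, partKeep, partLR]

lemma partRL_partVdash : partRL ρ (partVdash ρ f) = ∅ := by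
  ext ⟨q, r⟩
  grind [partRL, partVdash, partLR]

lemma partLR_sdiff_partLR : partLR ρ (f \ partLR ρ f) = ∅ := by
  ext ⟨q, r⟩
  grind [partLR]

lemma mem_partKeep_iff (h : ρ q = ρ r) : (q, r) ∈ partKeep ρ f ↔ (q, r) ∈ f := by
  grind [partKeep, partRL, partLR]

lemma mem_partDashv_iff_of_fwd_bwd (hq : ρ q = true) (hr : ρ r = false) :
    (q, r) ∈ partDashv ρ f ↔ (q, r) ∈ f := by
  grind [partDashv, partRL]

lemma mem_partVdash_iff_of_bwd_fwd (hq : ρ q = false) (hr : ρ r = true) :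
    (q, r) ∈ partVdash ρ f ↔ (q, r) ∈ f := by
  grind [partVdash, partLR]

lemma mem_partDashv_iff_of_bwd (hq : ρ q = false) : (q, r) ∈ partDashv ρ f ↔ q = r := by
  grind [partDashv, partRL]

lemma mem_partVdash_iff_of_fwd (hq : ρ q = true) : (q, r) ∈ partVdash ρ f ↔ q = r := by
  grind [partVdash, partLR]

lemma eq_of_mem_partDashv (hr : ρ r = true) (h : (q, r) ∈ partDashv ρ f) : q = r := by
  grind [partDashv, partRL]

lemma eq_of_mem_partVdash (hr : ρ r = false) (h : (q, r) ∈ partVdash ρ f) : q = r := by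
  grind [partVdash, partLR]

lemma self_mem_partDashv (hf : IsDet f) (hr : ρ r = true) (h : (q, r) ∈ f) :
    (q, q) ∈ partDashv ρ f := by
  refine Or.inr ⟨rfl, ?_⟩
  rintro ⟨s, hs, -, hs'⟩
  simp [hf q s r hs h, hr] at hs'

lemma self_mem_partVdash (hf : IsDet f) (hr : ρ r = false) (h : (q, r) ∈ f) :
    (q, q) ∈ partVdash ρ f := by
  refine Or.inr ⟨rfl, ?_⟩
  rintro ⟨s, hs, -, hs'⟩
  simp [hf q s r hs h, hr] at hs'

lemma mem_sdiff_partLR_iff :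
    (q, r) ∈ f \ partLR ρ f ↔ (q, r) ∈ f ∧ (ρ q = true ∨ ρ r = false) := by
  grind [partLR]

lemma glue_partDashv_partKeep (hf : IsDet f) :
    glue ρ (partDashv ρ f) (partKeep ρ f) = f \ partLR ρ f := by
  have hA : partLR ρ (partDashv ρ f) = ∅ := partLR_partDashv
  have hK : partRL ρ (partKeep ρ f) = ∅ := partRL_partKeep
  ext ⟨q, r⟩
  cases hq : ρ q <;> cases hr : ρ r
  · rw [mem_glue_iff_of_bwd_bwd hA hK hq hr]
    constructor
    · rintro ⟨x, hx, hqx, hxr⟩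
      obtain rfl := (mem_partDashv_iff_of_bwd hx).1 hxr
      exact mem_sdiff_partLR_iff.2 ⟨(mem_partKeep_iff (hq.trans hx.symm)).1 hqx, Or.inr hx⟩
    · exact fun h => ⟨r, hr, (mem_partKeep_iff (hq.trans hr.symm)).2 h.1,
        (mem_partDashv_iff_of_bwd hr).2 rfl⟩
  · rw [mem_glue_iff_of_bwd_fwd hA hK hq hr]
    exact ⟨fun h => absurd ⟨h.1, hq, hr⟩ (h.2 ∘ Or.inr),
      fun h => absurd ⟨h.1, hq, hr⟩ h.2⟩
  · rw [mem_glue_iff_of_fwd_bwd hA hK hq hr, mem_partDashv_iff_of_fwd_bwd hq hr]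
    exact ⟨fun h => mem_sdiff_partLR_iff.2 ⟨h, Or.inl hq⟩, fun h => h.1⟩
  · rw [mem_glue_iff_of_fwd_fwd hA hK hq hr]
    constructor
    · rintro ⟨x, hx, hqx, hxr⟩
      obtain rfl := eq_of_mem_partDashv hx hqx
      exact mem_sdiff_partLR_iff.2
        ⟨(mem_partKeep_iff (hq.trans hr.symm)).1 hxr, Or.inl hq⟩
    · exact fun h => ⟨q, hq, self_mem_partDashv hf hr h.1,
        (mem_partKeep_iff (hq.trans hr.symm)).2 h.1⟩

lemma glue_sdiff_partLR_partVdash (hf : IsDet f) :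
    glue ρ (f \ partLR ρ f) (partVdash ρ f) = f := by
  have hL : partLR ρ (f \ partLR ρ f) = ∅ := partLR_sdiff_partLR
  have hV : partRL ρ (partVdash ρ f) = ∅ := partRL_partVdash
  ext ⟨q, r⟩
  cases hq : ρ q <;> cases hr : ρ r
  · rw [mem_glue_iff_of_bwd_bwd hL hV hq hr]
    constructor
    · rintro ⟨x, hx, hqx, hxr⟩
      obtain rfl := eq_of_mem_partVdash hx hqx
      exact hxr.1
    · exact fun h => ⟨q, hq, self_mem_partVdash hf hr h,
        mem_sdiff_partLR_iff.2 ⟨h, Or.inr hr⟩⟩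
  · exact (mem_glue_iff_of_bwd_fwd hL hV hq hr).trans (mem_partVdash_iff_of_bwd_fwd hq hr)
  · rw [mem_glue_iff_of_fwd_bwd hL hV hq hr]
    exact ⟨fun h => h.1, fun h => mem_sdiff_partLR_iff.2 ⟨h, Or.inl hq⟩⟩
  · rw [mem_glue_iff_of_fwd_fwd hL hV hq hr]
    constructor
    · rintro ⟨x, hx, hqx, hxr⟩
      obtain rfl := (mem_partVdash_iff_of_fwd hx).1 hxr
      exact hqx.1
    · exact fun h => ⟨r, hr, mem_sdiff_partLR_iff.2 ⟨h, Or.inl hq⟩,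
        (mem_partVdash_iff_of_fwd hr).2 rfl⟩

end Decomposition

theorem det_decomposition_general {Q : Type} (ρ : Q → Bool)
    (f : Set (Q × Q)) (hf : IsDet f) :
    f = glue ρ (glue ρ (partDashv ρ f) (partKeep ρ f)) (partVdash ρ f) := by
  rw [glue_partDashv_partKeep hf, glue_sdiff_partLR_partVdash hf]

/-- for any deterministic transition `f`,
`f = f⊣ * f↔ * f⊢` for the gluing composition. -/
theorem det_decomposition {Q : Type} [Fintype Q] (ρ : Q → Bool)
    (f : Set (Q × Q)) (hf : IsDet f) :
    f = glue ρ (glue ρ (partDashv ρ f) (partKeep ρ f)) (partVdash ρ f) :=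
  det_decomposition_general ρ f hf

end Planar2DFT
end

section
/- There exist a directed set of states (Q,ρ), a total order < on Q, and transitions f, g ⊆ Q×Q, each planar with respect to ρ and < (but not deterministic), such that the gluing composition f*g is not planar with respect to ρ and <. In particular, planar transitions that are not required to be deterministic are not closed under gluing composition. -/
namespace Planar2DFT

/-!
When every state moves forward, the profile `G(ρ, f)` draws `f` as a bipartite graph between
two parallel lines (the `-1` side in decreasing order, then the `+1` side in increasing order),
so `f` is planar exactly when no two of its pairs cross, i.e. it is monotone. Gluing
forward transitions contains their relational composition. Now `f = {0↦0, 0↦1, 1↦1}` and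
`g = {1↦0, 1↦1}` are monotone (and nondeterministic), but routing through state `1` puts both
`0↦1` and `1↦0` into `f * g`, and these cross.
-/

section Forward

variable {Q : Type} {lt : Q → Q → Prop} {f g : Set (Q × Q)}

theorem ProfileEdge.forward {x y : Q × Bool} (h : ProfileEdge (fun _ => true) f x y) :
    x.2 = false ∧ y.2 = true ∧ (x.1, y.1) ∈ f := by
  obtain ⟨p, hp, rfl, rfl⟩ := h
  exact ⟨rfl, rfl, hp⟩

theorem ExtLt.snd_eq_true {x y : Q × Bool} (h : ExtLt lt x y) (hx : x.2 = true) :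
    y.2 = true := by
  rcases h with h | h | h <;> simp_all

theorem isPlanar_forward_iff :
    IsPlanar (fun _ => true) lt f ↔
      ¬ ∃ p ∈ f, ∃ p' ∈ f, lt p'.1 p.1 ∧ lt p.2 p'.2 := by
  refine not_congr ⟨?_, ?_⟩
  · rintro ⟨u, r, v, s, hur, hrv, hvs, huv, hrs⟩
    have hv : v.2 = true := by
      rcases huv with h | h
      · exact h.forward.2.1
      · simpa [h.forward.1] using hrv.snd_eq_true (hur.snd_eq_true h.forward.2.1)
    have hs : s.2 = true := by
      rcases hrs with h | h
      · exact h.forward.2.1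
      · simpa [h.forward.1] using hvs.snd_eq_true hv
    obtain ⟨hu, -, hf⟩ := (huv.resolve_right fun h => by simp [h.forward.1] at hv).forward
    obtain ⟨hr, -, hf'⟩ := (hrs.resolve_right fun h => by simp [h.forward.1] at hs).forward
    refine ⟨_, hf, _, hf', ?_, ?_⟩
    · rcases hur with h | h | h <;> simp_all
    · rcases hvs with h | h | h <;> simp_all
  · rintro ⟨⟨a, c⟩, hf, ⟨b, d⟩, hf', hba, hcd⟩
    exact ⟨(a, false), (b, false), (c, true), (d, true),
      .inr (.inr ⟨hba, rfl, rfl⟩), .inl ⟨rfl, rfl⟩, .inr (.inl ⟨hcd, rfl, rfl⟩),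
      .inl ⟨_, hf, rfl, rfl⟩, .inl ⟨_, hf', rfl, rfl⟩⟩

theorem mem_glue_of_forward {ρ : Q → Bool} {a b c : Q} (hab : (a, b) ∈ f) (hbc : (b, c) ∈ g)
    (ha : ρ a = true) (hb : ρ b = true) (hc : ρ c = true) : (a, c) ∈ glue ρ f g := by
  have hf : GlueEdge ρ f g (a, 0) (b, 1) :=
    .inl ⟨by simp, by simp, _, hab, by simp [ha], by simp [hb]⟩
  have hg : GlueEdge ρ f g (b, 1) (c, 2) :=
    .inr ⟨by simp, by simp, _, hbc, by simp [hb], by simp [hc]⟩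
  simpa [glue, ha, hc] using Relation.ReflTransGen.head hf (.single hg)

end Forward

def crossingLeft : Set (Fin 2 × Fin 2) := {(0, 0), (0, 1), (1, 1)}

def crossingRight : Set (Fin 2 × Fin 2) := {(1, 0), (1, 1)}

/-- planar (non-deterministic) transitions are not closed under
gluing composition: there are planar, non-deterministic `f` and `g` whose
gluing composition `f * g` is not planar. -/
theorem planar_not_closed_without_det :
    ∃ (n : ℕ) (ρ : Fin n → Bool) (lt : Fin n → Fin n → Prop)
      (_ : IsStrictTotalOrder (Fin n) lt) (f g : Set (Fin n × Fin n)),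
      IsPlanar ρ lt f ∧ IsPlanar ρ lt g ∧ ¬ IsDet f ∧ ¬ IsDet g ∧
      ¬ IsPlanar ρ lt (glue ρ f g) := by
  refine ⟨2, fun _ => true, (· < ·), inferInstance, crossingLeft, crossingRight,
    ?_, ?_, ?_, ?_, ?_⟩
  · rw [isPlanar_forward_iff]
    simp [crossingLeft]
  · rw [isPlanar_forward_iff]
    simp [crossingRight]
  · exact fun h => zero_ne_one (h 0 0 1 (by simp [crossingLeft]) (by simp [crossingLeft]))
  · exact fun h => zero_ne_one (h 1 0 1 (by simp [crossingRight]) (by simp [crossingRight]))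
  · have h01 : (0, 1) ∈ glue (fun _ => true) crossingLeft crossingRight :=
      mem_glue_of_forward (b := 1) (by simp [crossingLeft]) (by simp [crossingRight]) rfl rfl rfl
    have h10 : (1, 0) ∈ glue (fun _ => true) crossingLeft crossingRight :=
      mem_glue_of_forward (b := 1) (by simp [crossingLeft]) (by simp [crossingRight]) rfl rfl rfl
    rw [isPlanar_forward_iff, not_not]
    exact ⟨_, h10, _, h01, by decide, by decide⟩

end Planar2DFT
end

section
/- Every total function Σ* → Γ* computed by an aperiodic sequential transducer with exactly 2 states can be computed by a planar reversible two-way finite transducer. Moreover, such a planar reversible transducer exists with exactly 5 states. -/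
namespace Planar2DFT

/-!
Aperiodicity forces every letter to act on the two states of `T` either as the identity or as a
constant map, a reset. Identity letters are simulated by crossing them. Crossing a reset letter
directly would merge two states, which a reversible machine cannot do. Instead the machine emits,
turns back and walks left to the previous reset letter (or to `▷`): that letter is what put `T` in
its current state, so the state can be forgotten there without merging anything. It then walks
right again and crosses the reset letter in the new state. All transitions are partial
injections, planarity is a finite check, and since the machine is deterministic its output is
the unique one.
-/

namespace TwoWayTransducer

variable {Q A B : Type}

def ofFun (ρ : Q → Bool) (init : Q) (init_fwd : ρ init = true) (final : Set Q)
    (next : Tape A → Q → Option Q) (out : Tape A → Q → List B) : TwoWayTransducer Q A B where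
  ρ := ρ
  init := init
  init_fwd := init_fwd
  final := final
  δ a := {t | next a t.1 = some t.2.2 ∧ t.2.1 = out a t.1}

def beside (headLeft : Bool) (u : List (Tape A)) (q : Q) (a : Tape A) (v : List (Tape A)) :
    Config Q A :=
  if headLeft then (u, q, a :: v) else (u ++ [a], q, v)

theorem beside_state (b : Bool) (u : List (Tape A)) (q : Q) (a : Tape A) (v : List (Tape A)) :
    (beside b u q a v).2.1 = q := by
  cases b <;> rfl

theorem beside_inj {b : Bool} {u u' v v' : List (Tape A)} {q q' : Q} {a a' : Tape A}
    (h : beside b u q a v = beside b u' q' a' v') : u = u' ∧ q = q' ∧ a = a' ∧ v = v' := by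
  cases b <;> simp_all [beside]

theorem step_iff (T : TwoWayTransducer Q A B) (c : Config Q A) (w : List B) (c' : Config Q A) :
    T.Step c w c' ↔ ∃ a u v q r, (q, w, r) ∈ T.δ a ∧
      c = beside (T.ρ q) u q a v ∧ c' = beside (!T.ρ r) u r a v := by
  constructor
  · rintro ⟨a, u, v, q, r, hδ, h | h | h | h⟩ <;>
      exact ⟨a, u, v, q, r, hδ, by simp [beside, h]⟩
  · rintro ⟨a, u, v, q, r, hδ, rfl, rfl⟩
    refine ⟨a, u, v, q, r, hδ, ?_⟩
    cases hq : T.ρ q <;> cases hr : T.ρ r <;> simp [beside]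

theorem not_step_of_right_empty (T : TwoWayTransducer Q A B) {l : List (Tape A)} {q : Q}
    (hq : T.ρ q = true) (w : List B) (c' : Config Q A) : ¬ T.Step (l, q, []) w c' := by
  rw [step_iff]
  rintro ⟨a, u, v, q', r, -, hc, -⟩
  obtain rfl : q = q' := by simpa only [beside_state] using congrArg (·.2.1) hc
  simp [beside, hq] at hc

def StepDeterministic (T : TwoWayTransducer Q A B) : Prop :=
  ∀ c w₁ c₁ w₂ c₂, T.Step c w₁ c₁ → T.Step c w₂ c₂ → w₁ = w₂ ∧ c₁ = c₂

section Runs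

variable {T : TwoWayTransducer Q A B} {c c' c₁ c₂ c₃ d d' : Config Q A} {w w₁ w₂ v v' : List B}

theorem Run.single (h : T.Step c w c') : T.Run c w c' := by
  simpa using Run.step (Run.refl c) h

theorem Run.trans (h₁ : T.Run c₁ w₁ c₂) (h₂ : T.Run c₂ w₂ c₃) : T.Run c₁ (w₁ ++ w₂) c₃ := by
  induction h₂ with
  | refl => simpa using h₁
  | step _ hs ih => simpa using Run.step ih hs

theorem Run.head_cases (h : T.Run c w d) :
    (d = c ∧ w = []) ∨ ∃ w₁ c' w₂, T.Step c w₁ c' ∧ T.Run c' w₂ d ∧ w = w₁ ++ w₂ := by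
  induction h with
  | refl => exact Or.inl ⟨rfl, rfl⟩
  | step _ hs ih =>
    rcases ih with ⟨rfl, rfl⟩ | ⟨w₁, c', w₂, hs₁, hr, rfl⟩
    · exact Or.inr ⟨_, _, [], hs, Run.refl _, by simp⟩
    · exact Or.inr ⟨w₁, c', _, hs₁, Run.step hr hs, by simp⟩

theorem Run.exists_suffix_of_halts (hdet : T.StepDeterministic) (h : T.Run c v d)
    (hd : ∀ w c', ¬ T.Step d w c') (h' : T.Run c v' d') : ∃ x, T.Run d' x d ∧ v = v' ++ x := by
  induction h' with
  | refl => exact ⟨v, h, rfl⟩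
  | step _ hs ih =>
    obtain ⟨x, hx, rfl⟩ := ih
    rcases hx.head_cases with ⟨rfl, rfl⟩ | ⟨w₁, c', x', hs', hx', rfl⟩
    · exact absurd hs (hd _ _)
    · obtain ⟨rfl, rfl⟩ := hdet _ _ _ _ _ hs' hs
      exact ⟨x', hx', by simp⟩

theorem Run.eq_of_halts (hdet : T.StepDeterministic) (h : T.Run c v d) (h' : T.Run c v' d')
    (hd : ∀ w c', ¬ T.Step d w c') (hd' : ∀ w c', ¬ T.Step d' w c') : v = v' ∧ d = d' := by
  obtain ⟨x, hx, rfl⟩ := h.exists_suffix_of_halts hdet hd h'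
  rcases hx.head_cases with ⟨rfl, rfl⟩ | ⟨w₁, c', x', hs, -, -⟩
  · simp
  · exact absurd hs (hd' _ _)

end Runs

theorem computes_of_realizes (T : TwoWayTransducer Q A B) (hdet : T.StepDeterministic)
    (hfinal : ∀ q ∈ T.final, T.ρ q = true) (f : List A → List B)
    (hf : ∀ u, T.Realizes u (f u)) : T.Computes (fun u => some (f u)) := by
  intro u v
  refine ⟨fun h => Option.some_inj.mp h ▸ hf u, fun ⟨qf, hqf, hrun⟩ => ?_⟩
  obtain ⟨qf', hqf', hrun'⟩ := hf u
  exact congrArg some (hrun'.eq_of_halts hdet hrun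
    (not_step_of_right_empty T (hfinal _ hqf')) (not_step_of_right_empty T (hfinal _ hqf))).1

section OfFun

variable {ρ : Q → Bool} {init : Q} {init_fwd : ρ init = true} {final : Set Q}
  {next : Tape A → Q → Option Q} {out : Tape A → Q → List B}

theorem mem_δ_ofFun {a : Tape A} {q r : Q} {w : List B} :
    (q, w, r) ∈ (ofFun ρ init init_fwd final next out).δ a ↔ next a q = some r ∧ w = out a q :=
  Iff.rfl

theorem rel_ofFun (a : Tape A) :
    (ofFun ρ init init_fwd final next out).rel a = {p | next a p.1 = some p.2} := by
  ext p
  simp [rel, ofFun]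

theorem reversible_ofFun (hinj : ∀ a q q' r, next a q = some r → next a q' = some r → q = q') :
    (ofFun ρ init init_fwd final next out).Reversible := by
  intro a
  simp only [IsRev, IsDet, rel_ofFun, Set.mem_ofPred_eq]
  exact ⟨fun q r r' h h' => Option.some_injective _ (h.symm.trans h'), hinj a⟩

theorem step_ofFun {a : Tape A} {q r : Q} (h : next a q = some r) (u v : List (Tape A)) :
    (ofFun ρ init init_fwd final next out).Step (beside (ρ q) u q a v) (out a q)
      (beside (!ρ r) u r a v) :=
  (step_iff _ _ _ _).2 ⟨a, u, v, q, r, ⟨h, rfl⟩, rfl, rfl⟩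

theorem stepDeterministic_ofFun : (ofFun ρ init init_fwd final next out).StepDeterministic := by
  intro c w₁ c₁ w₂ c₂ h₁ h₂
  obtain ⟨a, u, v, q, r, hδ, rfl, rfl⟩ := (step_iff _ _ _ _).1 h₁
  obtain ⟨a', u', v', q', r', hδ', hc, rfl⟩ := (step_iff _ _ _ _).1 h₂
  obtain ⟨hr, rfl⟩ := mem_δ_ofFun.1 hδ
  obtain ⟨hr', rfl⟩ := mem_δ_ofFun.1 hδ'
  obtain rfl : q = q' := by simpa only [beside_state] using congrArg (·.2.1) hc
  obtain ⟨rfl, -, rfl, rfl⟩ := beside_inj hc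
  obtain rfl : r = r' := Option.some_injective _ (hr.symm.trans hr')
  exact ⟨rfl, rfl⟩

end OfFun

end TwoWayTransducer

theorem fin_two_map_eq_id_or_const :
    ∀ (f : Fin 2 → Fin 2) (x : Fin 2), f x = x → f = id ∨ ∃ c, f = fun _ => c := by
  decide

theorem SeqTransducer.Aperiodic.next_eq_id_or_const {A B : Type} {T : SeqTransducer (Fin 2) A B}
    (hT : T.Aperiodic) (a : A) : T.next a = id ∨ ∃ c, T.next a = fun _ => c := by
  obtain ⟨n, hn⟩ := hT
  refine fin_two_map_eq_id_or_const _ ((T.next a)^[n] 0) ?_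
  simpa only [Function.iterate_succ_apply'] using congrFun (hn _ (SeqGen.gen a)) 0

namespace TwoStateMachine

/-- The state `fwd m` moves right simulating `T` in state `m`, `back m` walks left to the last
letter resetting `T`, and `2` walks right again to where that walk started. -/
def rho : Fin 5 → Bool := ![true, false, true, false, true]

def fwd : Fin 2 → Fin 5 := ![0, 4]

def back : Fin 2 → Fin 5 := ![1, 3]

theorem rho_fwd : ∀ m, rho (fwd m) = true := by decide

theorem rho_back : ∀ m, rho (back m) = false := by decide

theorem rho_skip : rho 2 = true := rfl

/-- On a letter resetting `T` to `c`, the state `fwd m` emits and turns back as `back m`; the walk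
of `back c` ends there, turning into `2`, and `2` crosses it as `fwd c`. -/
def resetMove : Fin 2 → Fin 5 → Option (Fin 5) :=
  ![![some 1, some 2, some 0, none, some 3], ![some 1, none, some 4, some 2, some 3]]

theorem resetMove_fwd : ∀ c m, resetMove c (fwd m) = some (back m) := by decide

theorem resetMove_back : ∀ c, resetMove c (back c) = some 2 := by decide

theorem resetMove_skip : ∀ c, resetMove c 2 = some (fwd c) := by decide

def letterMove (f : Fin 2 → Fin 2) : Fin 5 → Option (Fin 5) :=
  if f 0 = f 1 then resetMove (f 0) else if f = id then some else fun _ => none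

set_option synthInstance.maxSize 512 in
theorem isPlanar_letterMove (f : Fin 2 → Fin 2) :
    IsPlanar rho (· < ·) {p | letterMove f p.1 = some p.2} := by
  revert f
  unfold IsPlanar ProfileEdge ExtLt
  simp only [Set.mem_ofPred_eq]
  decide

theorem letterMove_id : letterMove id = some := by decide

theorem letterMove_const : ∀ c, letterMove (fun _ => c) = resetMove c := by decide

theorem letterMove_injective :
    ∀ f q q' r, letterMove f q = some r → letterMove f q' = some r → q = q' := by
  decide

/-- The walk of `back i` ends at `▷` when `T` has not been reset, so is still in state `i`. -/
def lendMove (i : Fin 2) (q : Fin 5) : Option (Fin 5) :=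
  if q = fwd i then some q else if q = back i then some 2 else none

theorem lendMove_back : ∀ i, lendMove i (back i) = some 2 := by decide

def rendMove : Fin 5 → Option (Fin 5) := ![some 0, none, none, none, some 4]

theorem lendMove_injective :
    ∀ i q q' r, lendMove i q = some r → lendMove i q' = some r → q = q' := by
  decide

theorem rendMove_injective :
    ∀ q q' r, rendMove q = some r → rendMove q' = some r → q = q' := by
  decide

def emit {B : Type} (g : Fin 2 → List B) : Fin 5 → List B := ![g 0, [], [], [], g 1]

theorem emit_fwd {B : Type} (g : Fin 2 → List B) (m : Fin 2) : emit g (fwd m) = g m := by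
  fin_cases m <;> rfl

theorem emit_back {B : Type} (g : Fin 2 → List B) (m : Fin 2) : emit g (back m) = [] := by
  fin_cases m <;> rfl

theorem emit_skip {B : Type} (g : Fin 2 → List B) : emit g 2 = [] := rfl

variable {A B : Type} (T : SeqTransducer (Fin 2) A B)

def move : Tape A → Fin 5 → Option (Fin 5)
  | .lend => lendMove T.init
  | .rend => rendMove
  | .sym a => letterMove (T.next a)

def output : Tape A → Fin 5 → List B
  | .lend => fun _ => []
  | .rend => emit T.fin
  | .sym a => emit (T.out a)

def machine : TwoWayTransducer (Fin 5) A B :=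
  .ofFun rho (fwd T.init) (rho_fwd T.init) (Set.range fwd) (move T) (output T)

theorem machine_planar : (machine T).Planar :=
  ⟨(· < ·), inferInstance, fun a => by
    rw [machine, TwoWayTransducer.rel_ofFun]; exact isPlanar_letterMove (T.next a)⟩

theorem machine_reversible : (machine T).Reversible :=
  TwoWayTransducer.reversible_ofFun fun
    | .lend => lendMove_injective T.init
    | .rend => rendMove_injective
    | .sym a => letterMove_injective (T.next a)

theorem output_sym (a : A) : output T (.sym a) = emit (T.out a) := rfl

open TwoWayTransducer

variable {T}

theorem machine_step {a : Tape A} {q r : Fin 5} (h : move T a q = some r)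
    (u v : List (Tape A)) :
    (machine T).Step (beside (rho q) u q a v) (output T a q) (beside (!rho r) u r a v) :=
  step_ofFun h u v

variable (T) in
/-- The invariant of the simulation: from the right end of `l`, the state `back m` walks left to
the last letter resetting `T` to `m` (or to `▷`) and then returns to the right end of `l`. -/
def Rewinds (l : List (Tape A)) (m : Fin 2) : Prop :=
  ∀ r, (machine T).Run (l, back m, r) [] (l, 2, r)

theorem move_sym_of_id {a : A} (h : T.next a = id) (q : Fin 5) : move T (.sym a) q = some q := by
  rw [move, h, letterMove_id]

theorem move_sym_of_const {a : A} {c : Fin 2} (h : T.next a = fun _ => c) :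
    move T (.sym a) = resetMove c := by
  rw [move, h, letterMove_const]

theorem rewinds_lend : Rewinds T [.lend] T.init := fun r =>
  Run.single <| by
    simpa [beside, rho_back, rho_skip, output] using
      machine_step (T := T) (a := .lend) (lendMove_back T.init) [] r

theorem rewinds_snoc_reset {a : A} {c : Fin 2} (h : T.next a = fun _ => c)
    (l : List (Tape A)) : Rewinds T (l ++ [.sym a]) c := fun r =>
  Run.single <| by
    simpa [beside, rho_back, rho_skip, output_sym, emit_back] using
      machine_step (a := .sym a) (q := back c) (r := 2)
        (by rw [move_sym_of_const h, resetMove_back]) l r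

theorem rewinds_snoc_id {a : A} (h : T.next a = id) {l : List (Tape A)} {m : Fin 2}
    (hl : Rewinds T l m) : Rewinds T (l ++ [.sym a]) m := fun r => by
  have walk_left : (machine T).Step (l ++ [.sym a], back m, r) [] (l, back m, .sym a :: r) := by
    simpa [beside, rho_back, output_sym, emit_back] using
      machine_step (move_sym_of_id h (back m)) l r
  have walk_right : (machine T).Step (l, 2, .sym a :: r) [] (l ++ [.sym a], 2, r) := by
    simpa [beside, rho_skip, output_sym, emit_skip] using machine_step (move_sym_of_id h 2) l r
  simpa using (Run.single walk_left).trans ((hl _).trans (Run.single walk_right))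

theorem run_letter (hT : T.Aperiodic) {l : List (Tape A)} {m : Fin 2} (hl : Rewinds T l m)
    (a : A) (r : List (Tape A)) :
    (machine T).Run (l, fwd m, .sym a :: r) (T.out a m) (l ++ [.sym a], fwd (T.next a m), r) ∧
      Rewinds T (l ++ [.sym a]) (T.next a m) := by
  rcases hT.next_eq_id_or_const a with h | ⟨c, h⟩
  · refine ⟨Run.single ?_, by simpa [h] using rewinds_snoc_id h hl⟩
    simpa [beside, rho_fwd, output_sym, emit_fwd, h] using
      machine_step (move_sym_of_id h (fwd m)) l r
  · refine ⟨?_, by simpa [h] using rewinds_snoc_reset h l⟩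
    have turn : (machine T).Step (l, fwd m, .sym a :: r) (T.out a m) (l, back m, .sym a :: r) := by
      simpa [beside, rho_fwd, rho_back, output_sym, emit_fwd] using
        machine_step (a := .sym a) (q := fwd m) (r := back m)
          (by rw [move_sym_of_const h, resetMove_fwd]) l r
    have resume : (machine T).Step (l, 2, .sym a :: r) [] (l ++ [.sym a], fwd c, r) := by
      simpa [beside, rho_fwd, rho_skip, output_sym, emit_skip] using
        machine_step (a := .sym a) (q := 2) (r := fwd c)
          (by rw [move_sym_of_const h, resetMove_skip]) l r
    simpa [h] using (Run.single turn).trans ((hl _).trans (Run.single resume))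

theorem run_word (hT : T.Aperiodic) (u : List A) :
    ∀ {l : List (Tape A)} {m : Fin 2}, Rewinds T l m →
      (machine T).Run (l, fwd m, u.map .sym ++ [.rend]) ((T.run u m).2 ++ T.fin (T.run u m).1)
        (l ++ u.map .sym ++ [.rend], fwd (T.run u m).1, []) := by
  induction u with
  | nil =>
    intro l m _
    have hmove : move T .rend (fwd m) = some (fwd m) := by fin_cases m <;> rfl
    simpa [SeqTransducer.run, beside, rho_fwd, output, emit_fwd] using
      Run.single (machine_step hmove l [])
  | cons a u ih =>
    intro l m hl
    obtain ⟨hrun, hl'⟩ := run_letter hT hl a (u.map .sym ++ [.rend])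
    simpa [SeqTransducer.run] using hrun.trans (ih hl')

theorem realizes_fn (hT : T.Aperiodic) (u : List A) : (machine T).Realizes u (T.fn u) := by
  have enter : (machine T).Step ([], fwd T.init, tapeOf u) [] ([.lend], fwd T.init,
      u.map .sym ++ [.rend]) := by
    have hmove : move T .lend (fwd T.init) = some (fwd T.init) := by simp [move, lendMove]
    simpa [beside, rho_fwd, output, tapeOf] using machine_step hmove [] (u.map .sym ++ [.rend])
  refine ⟨_, ⟨(T.run u T.init).1, rfl⟩, ?_⟩
  change (machine T).Run ([], fwd T.init, tapeOf u)
    ((T.run u T.init).2 ++ T.fin (T.run u T.init).1) (tapeOf u, _, [])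
  simpa [tapeOf] using (Run.single enter).trans (run_word hT u rewinds_lend)

theorem machine_computes (hT : T.Aperiodic) : (machine T).Computes (fun u => some (T.fn u)) :=
  computes_of_realizes _ stepDeterministic_ofFun (by rintro _ ⟨m, rfl⟩; exact rho_fwd m) _
    (realizes_fn hT)

end TwoStateMachine

theorem two_state_aperiodic_to_planar_reversible_general {A B : Type}
    (T : SeqTransducer (Fin 2) A B)
    (hT : T.Aperiodic) :
    ∃ T' : TwoWayTransducer (Fin 5) A B,
      T'.Planar ∧ T'.Reversible ∧ T'.Computes (fun w => some (T.fn w)) :=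
  ⟨TwoStateMachine.machine T, TwoStateMachine.machine_planar T,
    TwoStateMachine.machine_reversible T, TwoStateMachine.machine_computes hT⟩

/-- every total function computed by a 2-state aperiodic
sequential transducer is computed by a planar reversible two-way finite
transducer, which moreover can be taken with exactly 5 states. -/
theorem two_state_aperiodic_to_planar_reversible {A B : Type}
    [Fintype A] [Fintype B] (T : SeqTransducer (Fin 2) A B)
    (hT : T.Aperiodic) :
    ∃ T' : TwoWayTransducer (Fin 5) A B,
      T'.Planar ∧ T'.Reversible ∧ T'.Computes (fun w => some (T.fn w)) :=
  two_state_aperiodic_to_planar_reversible_general T hT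
end Planar2DFT
end
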